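/- arXiv:2307.06595 — 6 statements merged into one kernel-verified Lean document; each statement's English description precedes it below -/
import Mathlib

section
/- Let 𝒞 ⊆ 𝕄 be a nonzero sum-rank metric code and let r ∈ [dim(𝒞)]. Let j ∈ [t] and 0 ≤ δ ≤ n_j − 1 be such that d_r(𝒞) − 1 ≥ n_1 + ... + n_{j−1} + δ. Then dim(𝒞) ≤ Σ_{i=j}^t m_i n_i − m_j δ + r − 1. -/
open Module

variable {F : Type*} [Field F] [Fintype F] {t : ℕ} {m n : Fin t → ℕ}

/-- The sum-rank weight of an element of `𝕄 = F^{m 0 × n 0} × ⋯ × F^{m (t-1) × n (t-1)}`. -/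
noncomputable def srk (C : ∀ i : Fin t, Matrix (Fin (m i)) (Fin (n i)) F) : ℕ :=
  ∑ i, (C i).rank

/-- The maximum sum-rank of a code. -/
noncomputable def maxsrk (𝒞 : Submodule F (∀ i : Fin t, Matrix (Fin (m i)) (Fin (n i)) F)) : ℕ :=
  sSup {w | ∃ C ∈ 𝒞, srk C = w}

/-- The minimum distance of a code. -/
noncomputable def minDist (𝒞 : Submodule F (∀ i : Fin t, Matrix (Fin (m i)) (Fin (n i)) F)) : ℕ :=
  sInf {w | ∃ C ∈ 𝒞, C ≠ 0 ∧ srk C = w}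

/-- The maximum rank of a subspace of a matrix space. -/
noncomputable def maxrank {a b : ℕ} (𝒜 : Submodule F (Matrix (Fin a) (Fin b) F)) : ℕ :=
  sSup {w | ∃ A ∈ 𝒜, A.rank = w}

/-- Optimal anticodes in a single matrix space. -/
def IsOptAnticode {a b : ℕ} (𝒜 : Submodule F (Matrix (Fin a) (Fin b) F)) : Prop :=
  Module.finrank F 𝒜 = a * maxrank 𝒜

/-- The weight of a sum-rank metric code: the minimum of `maxsrk` over products of
optimal anticodes containing it. -/
noncomputable def codeWt (𝒞 : Submodule F (∀ i : Fin t, Matrix (Fin (m i)) (Fin (n i)) F)) : ℕ :=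
  sInf {w | ∃ 𝒜 : ∀ i : Fin t, Submodule F (Matrix (Fin (m i)) (Fin (n i)) F),
    (∀ i, IsOptAnticode (𝒜 i)) ∧ 𝒞 ≤ Submodule.pi Set.univ 𝒜 ∧
      maxsrk (Submodule.pi Set.univ 𝒜) = w}

/-- The `r`-th generalized sum-rank weight of a code. -/
noncomputable def gw (𝒞 : Submodule F (∀ i : Fin t, Matrix (Fin (m i)) (Fin (n i)) F))
    (r : ℕ) : ℕ :=
  sInf {w | ∃ 𝒟 : Submodule F (∀ i : Fin t, Matrix (Fin (m i)) (Fin (n i)) F),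
    𝒟 ≤ 𝒞 ∧ r ≤ Module.finrank F 𝒟 ∧ codeWt 𝒟 = w}

/-!
Let `𝒫 = 𝒜₁ × ⋯ × 𝒜ₜ`, where `𝒜ᵢ` consists of the `mᵢ × nᵢ` matrices supported on their first
`cᵢ` columns, with `cᵢ = nᵢ` for `i < j`, `c_j = δ` and `cᵢ = 0` for `i > j`. Each `𝒜ᵢ` is an
optimal anticode of maximum rank `cᵢ`, so every subspace of `𝒞 ∩ 𝒫` has weight at most
`∑ cᵢ = n₁ + ⋯ + n_{j-1} + δ < d_r(𝒞)`; hence `dim (𝒞 ∩ 𝒫) < r`. The bound is then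
`dim 𝒞 + dim 𝒫 ≤ dim 𝕄 + dim (𝒞 ∩ 𝒫)` with `dim 𝒫 = ∑ mᵢ cᵢ`.
-/

open Matrix

theorem Finset.sum_ite_lt_ite_eq {α M : Type*} [Fintype α] [LinearOrder α]
    [LocallyFiniteOrderBot α] [AddCommMonoid M] (f g : α → M) (j : α) :
    ∑ i, (if i < j then f i else if i = j then g i else 0) = ∑ i ∈ Iio j, f i + g j := by
  rw [Finset.sum_ite, Finset.sum_ite_eq', if_pos (by simp), Finset.filter_gt_eq_Iio]

theorem Finset.sum_Iio_add_sum_Ici {α M : Type*} [Fintype α] [LinearOrder α]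
    [LocallyFiniteOrderBot α] [LocallyFiniteOrderTop α] [AddCommMonoid M] (f : α → M) (j : α) :
    ∑ i ∈ Iio j, f i + ∑ i ∈ Ici j, f i = ∑ i, f i := by
  rw [← Finset.sum_filter_add_sum_filter_not Finset.univ (· < j)]
  simp [Finset.filter_gt_eq_Iio, not_lt, Finset.filter_le_eq_Ici]

theorem Submodule.finrank_pi_univ {K ι : Type*} [Field K] [Fintype ι] {V : ι → Type*}
    [∀ i, AddCommGroup (V i)] [∀ i, Module K (V i)] [∀ i, FiniteDimensional K (V i)]
    (p : ∀ i, Submodule K (V i)) :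
    finrank K (Submodule.pi Set.univ p) = ∑ i, finrank K (p i) := by
  have hrange : LinearMap.range (LinearMap.piMap fun i => (p i).subtype) =
      Submodule.pi Set.univ p := by
    ext x
    exact ⟨by rintro ⟨y, rfl⟩ i -; exact (y i).2, fun hx => ⟨fun i => ⟨x i, hx i trivial⟩, rfl⟩⟩
  rw [← hrange, LinearMap.finrank_range_of_inj
    (Function.Injective.piMap fun i => (p i).injective_subtype), Module.finrank_pi_fintype]

theorem Submodule.finrank_add_finrank_le_finrank_add_finrank_inf {K V : Type*} [Field K]
    [AddCommGroup V] [Module K V] [FiniteDimensional K V] (U W : Submodule K V) :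
    finrank K U + finrank K W ≤ finrank K V + finrank K ↥(U ⊓ W) := by
  rw [← Submodule.finrank_sup_add_finrank_inf_eq]
  exact Nat.add_le_add_right (Submodule.finrank_le _) _

namespace Matrix

def colSupported (R ι : Type*) {κ : Type*} [Semiring R] (s : Set κ) :
    Submodule R (Matrix ι κ R) where
  carrier := {A | ∀ i, ∀ j ∉ s, A i j = 0}
  add_mem' hA hB i j hj := by simp [hA i j hj, hB i j hj]
  zero_mem' _ _ _ := rfl
  smul_mem' c A hA i j hj := by simp [hA i j hj]

theorem mem_colSupported {R ι κ : Type*} [Semiring R] {s : Set κ} {A : Matrix ι κ R} :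
    A ∈ colSupported R ι s ↔ ∀ i, ∀ j ∉ s, A i j = 0 := Iff.rfl

variable {K ι κ : Type*} [Field K]

open Classical in
theorem colSupported_eq_map_pi (s : Set κ) : colSupported K ι s =
    (Submodule.pi Set.univ fun _ : ι => Submodule.pi Set.univ fun j : κ =>
      if j ∈ s then ⊤ else ⊥).map (ofLinearEquiv K).toLinearMap := by
  ext A
  rw [Submodule.mem_map_equiv, mem_colSupported]
  simp only [coe_ofLinearEquiv_symm, Submodule.mem_pi, Set.mem_univ, true_implies, of_symm_apply]
  refine forall_congr' fun i => forall_congr' fun j => ?_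
  by_cases hj : j ∈ s
  · simp only [hj, if_true, Submodule.mem_top, not_true_eq_false, false_implies]
  · simp only [hj, if_false, Submodule.mem_bot, not_false_eq_true, true_implies]

theorem finrank_colSupported [Fintype ι] [Fintype κ] (s : Finset κ) :
    finrank K (colSupported K ι (s : Set κ)) = Fintype.card ι * s.card := by
  classical
  rw [colSupported_eq_map_pi, LinearEquiv.finrank_map_eq]
  simp_rw [Submodule.finrank_pi_univ, apply_ite (fun p : Submodule K K => finrank K p)]
  simp

theorem rank_diagonal_ite_mem [Fintype κ] [DecidableEq κ] (s : Finset κ) :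
    (diagonal fun j => if j ∈ s then (1 : K) else 0).rank = s.card := by
  classical
  rw [rank_diagonal, Fintype.card_subtype]
  simp

theorem rank_le_card_of_mem_colSupported [Fintype κ] {s : Finset κ} {A : Matrix ι κ K}
    (hA : A ∈ colSupported K ι (s : Set κ)) : A.rank ≤ s.card := by
  classical
  have hproj : A * diagonal (fun j => if j ∈ s then (1 : K) else 0) = A := by
    ext i j
    by_cases hj : j ∈ s
    · simp [mul_diagonal, hj]
    · simp [mul_diagonal, hj, hA i j hj]
  calc A.rank = (A * diagonal fun j => if j ∈ s then (1 : K) else 0).rank := by rw [hproj]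
    _ ≤ s.card := (rank_mul_le_right _ _).trans (rank_diagonal_ite_mem s).le

theorem exists_mem_colSupported_rank_eq [Fintype ι] [Fintype κ] [DecidableEq ι] [DecidableEq κ]
    (e : κ ↪ ι) (s : Finset κ) : ∃ A ∈ colSupported K ι (s : Set κ), A.rank = s.card := by
  set D : Matrix κ κ K := diagonal fun j => if j ∈ s then 1 else 0
  set E : Matrix ι κ K := (1 : Matrix ι ι K).submatrix id e
  have hED : (1 : Matrix ι ι K).submatrix e id * (E * D) = D := by
    rw [← Matrix.mul_assoc, ← submatrix_mul _ _ _ _ _ Function.bijective_id, Matrix.one_mul,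
      submatrix_one_embedding, Matrix.one_mul]
  have hmem : E * D ∈ colSupported K ι (s : Set κ) := fun i j hj => by
    simp [D, mul_diagonal, Finset.mem_coe.not.mp hj]
  refine ⟨E * D, hmem, le_antisymm (rank_le_card_of_mem_colSupported hmem) ?_⟩
  calc s.card = D.rank := (rank_diagonal_ite_mem s).symm
    _ = ((1 : Matrix ι ι K).submatrix e id * (E * D)).rank := by rw [hED]
    _ ≤ (E * D).rank := rank_mul_le_right _ _

end Matrix

section Anticodes

variable {K : Type*} [Field K] {a b : ℕ}

theorem rank_le_maxrank {𝒜 : Submodule K (Matrix (Fin a) (Fin b) K)}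
    {A : Matrix (Fin a) (Fin b) K} (hA : A ∈ 𝒜) : A.rank ≤ maxrank 𝒜 :=
  le_csSup ⟨b, by rintro _ ⟨B, -, rfl⟩; exact B.rank_le_width⟩ ⟨A, hA, rfl⟩

theorem maxrank_colSupported (hba : b ≤ a) (s : Finset (Fin b)) :
    maxrank (colSupported K (Fin a) (s : Set (Fin b))) = s.card := by
  obtain ⟨A, hA, hrank⟩ := exists_mem_colSupported_rank_eq (K := K) (Fin.castLEEmb hba) s
  refine le_antisymm (csSup_le ⟨_, A, hA, rfl⟩ ?_) (hrank ▸ rank_le_maxrank hA)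
  rintro _ ⟨B, hB, rfl⟩
  exact rank_le_card_of_mem_colSupported hB

theorem isOptAnticode_colSupported (hba : b ≤ a) (s : Finset (Fin b)) :
    IsOptAnticode (colSupported K (Fin a) (s : Set (Fin b))) := by
  rw [IsOptAnticode, finrank_colSupported, maxrank_colSupported hba, Fintype.card_fin]

end Anticodes

section Codes

variable {K : Type*} [Field K]

theorem srk_le_sum_maxrank {𝒜 : ∀ i, Submodule K (Matrix (Fin (m i)) (Fin (n i)) K)}
    {C : ∀ i, Matrix (Fin (m i)) (Fin (n i)) K} (hC : C ∈ Submodule.pi Set.univ 𝒜) :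
    srk C ≤ ∑ i, maxrank (𝒜 i) :=
  Finset.sum_le_sum fun i _ => rank_le_maxrank (hC i trivial)

theorem maxsrk_pi_le_sum_maxrank (𝒜 : ∀ i, Submodule K (Matrix (Fin (m i)) (Fin (n i)) K)) :
    maxsrk (Submodule.pi Set.univ 𝒜) ≤ ∑ i, maxrank (𝒜 i) :=
  csSup_le ⟨_, 0, zero_mem _, rfl⟩ (by rintro _ ⟨C, hC, rfl⟩; exact srk_le_sum_maxrank hC)

theorem gw_le_sum_maxrank {𝒞 : Submodule K (∀ i, Matrix (Fin (m i)) (Fin (n i)) K)} {r : ℕ}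
    {𝒜 : ∀ i, Submodule K (Matrix (Fin (m i)) (Fin (n i)) K)} (h𝒜 : ∀ i, IsOptAnticode (𝒜 i))
    (hr : r ≤ finrank K ↥(𝒞 ⊓ Submodule.pi Set.univ 𝒜)) :
    gw 𝒞 r ≤ ∑ i, maxrank (𝒜 i) :=
  calc gw 𝒞 r ≤ codeWt (𝒞 ⊓ Submodule.pi Set.univ 𝒜) := Nat.sInf_le ⟨_, inf_le_left, hr, rfl⟩
    _ ≤ maxsrk (Submodule.pi Set.univ 𝒜) := Nat.sInf_le ⟨𝒜, h𝒜, inf_le_right, rfl⟩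
    _ ≤ ∑ i, maxrank (𝒜 i) := maxsrk_pi_le_sum_maxrank 𝒜

theorem finrank_add_lt_of_sum_maxrank_lt_gw
    (𝒞 : Submodule K (∀ i, Matrix (Fin (m i)) (Fin (n i)) K)) (r : ℕ)
    {𝒜 : ∀ i, Submodule K (Matrix (Fin (m i)) (Fin (n i)) K)} (h𝒜 : ∀ i, IsOptAnticode (𝒜 i))
    (hlt : ∑ i, maxrank (𝒜 i) < gw 𝒞 r) :
    finrank K 𝒞 + ∑ i, m i * maxrank (𝒜 i) < ∑ i, m i * n i + r := by
  have hinf : finrank K ↥(𝒞 ⊓ Submodule.pi Set.univ 𝒜) < r := by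
    by_contra! h
    exact hlt.not_ge (gw_le_sum_maxrank h𝒜 h)
  have hpi : finrank K (Submodule.pi Set.univ 𝒜) = ∑ i, m i * maxrank (𝒜 i) := by
    rw [Submodule.finrank_pi_univ]
    exact Finset.sum_congr rfl fun i _ => h𝒜 i
  have hambient : finrank K (∀ i, Matrix (Fin (m i)) (Fin (n i)) K) = ∑ i, m i * n i := by
    simp [Module.finrank_pi_fintype, finrank_matrix]
  have := Submodule.finrank_add_finrank_le_finrank_add_finrank_inf 𝒞 (Submodule.pi Set.univ 𝒜)
  omega

end Codes

theorem singleton_bound_general (hmn : ∀ i, n i ≤ m i)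
    (𝒞 : Submodule F (∀ i : Fin t, Matrix (Fin (m i)) (Fin (n i)) F))
    (r : ℕ)
    (j : Fin t) (δ : ℕ) (hδ : δ + 1 ≤ n j)
    (hd : ∑ i ∈ Finset.Iio j, n i + δ + 1 ≤ gw 𝒞 r) :
    Module.finrank F 𝒞 + m j * δ + 1 ≤ ∑ i ∈ Finset.Ici j, m i * n i + r := by
  set c : Fin t → ℕ := fun i => if i < j then n i else if i = j then δ else 0 with hc
  have hcn : ∀ i, c i ≤ n i := fun i => by
    simp only [hc]
    split_ifs with hlt heq
    · exact le_rfl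
    · subst heq; omega
    · exact Nat.zero_le _
  set 𝒜 : ∀ i, Submodule F (Matrix (Fin (m i)) (Fin (n i)) F) := fun i =>
    colSupported F (Fin (m i)) ({y : Fin (n i) | (y : ℕ) < c i} : Finset (Fin (n i)))
  have hmaxrank : ∀ i, maxrank (𝒜 i) = c i := fun i => by
    rw [maxrank_colSupported (hmn i), Fin.card_filter_val_lt, min_eq_right (hcn i)]
  have hsum : ∑ i, maxrank (𝒜 i) = ∑ i ∈ Finset.Iio j, n i + δ := by
    simp only [hmaxrank, hc]
    exact Finset.sum_ite_lt_ite_eq n (fun _ => δ) j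
  have hwsum : ∑ i, m i * maxrank (𝒜 i) = ∑ i ∈ Finset.Iio j, m i * n i + m j * δ := by
    simp only [hmaxrank, hc, mul_ite, mul_zero]
    exact Finset.sum_ite_lt_ite_eq (fun i => m i * n i) (fun i => m i * δ) j
  have key := finrank_add_lt_of_sum_maxrank_lt_gw 𝒞 r
    (fun i => isOptAnticode_colSupported (hmn i) _) (by rw [hsum]; omega)
  rw [hwsum, ← Finset.sum_Iio_add_sum_Ici (fun i => m i * n i) j] at key
  omega

/-- **Singleton Bound.** Let `𝒞 ⊆ 𝕄` be a nonzero sum-rank metric code, `r ∈ [dim 𝒞]`,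
`j ∈ [t]` and `0 ≤ δ ≤ n j - 1` with `d_r(𝒞) - 1 ≥ n_1 + ⋯ + n_{j-1} + δ`. Then
`dim 𝒞 ≤ ∑_{i=j}^t m i * n i - m j * δ + r - 1`. -/
theorem singleton_bound (ht : 0 < t)
    (hm_mono : ∀ i j : Fin t, i ≤ j → m j ≤ m i)
    (hn_pos : ∀ i, 0 < n i) (hmn : ∀ i, n i ≤ m i)
    (𝒞 : Submodule F (∀ i : Fin t, Matrix (Fin (m i)) (Fin (n i)) F)) (h𝒞 : 𝒞 ≠ ⊥)
    (r : ℕ) (hr1 : 1 ≤ r) (hr2 : r ≤ Module.finrank F 𝒞)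
    (j : Fin t) (δ : ℕ) (hδ : δ + 1 ≤ n j)
    (hd : ∑ i ∈ Finset.Iio j, n i + δ + 1 ≤ gw 𝒞 r) :
    Module.finrank F 𝒞 + m j * δ + 1 ≤ ∑ i ∈ Finset.Ici j, m i * n i + r :=
  singleton_bound_general hmn 𝒞 r j δ hδ hd
end

section
/- Let 𝒞 ⊆ 𝕄 be a k-dimensional sum-rank metric code. Then 𝒞 satisfies the chain condition if and only if d_r(𝒞) = g_r(𝒞) for all r ∈ [k]. -/
open Module

variable {F : Type*} [Field F] [Fintype F] {t : ℕ} {m n : Fin t → ℕ}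

/-- Greedy `r`-subcodes of a code. -/
def IsGreedy (𝒞 : Submodule F (∀ i : Fin t, Matrix (Fin (m i)) (Fin (n i)) F)) :
    ℕ → Submodule F (∀ i : Fin t, Matrix (Fin (m i)) (Fin (n i)) F) → Prop
  | 0, 𝒟 => 𝒟 = ⊥
  | 1, 𝒟 => 𝒟 ≤ 𝒞 ∧ Module.finrank F 𝒟 = 1 ∧ codeWt 𝒟 = gw 𝒞 1
  | (r + 2), 𝒟 => 𝒟 ≤ 𝒞 ∧ Module.finrank F 𝒟 = r + 2 ∧
      (∃ 𝒟', IsGreedy 𝒞 (r + 1) 𝒟' ∧ 𝒟' ≤ 𝒟) ∧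
      (∀ ℰ : Submodule F (∀ i : Fin t, Matrix (Fin (m i)) (Fin (n i)) F),
        ℰ ≤ 𝒞 → Module.finrank F ℰ = r + 2 →
        (∃ 𝒟', IsGreedy 𝒞 (r + 1) 𝒟' ∧ 𝒟' ≤ ℰ) → codeWt 𝒟 ≤ codeWt ℰ)

/-- The `r`-th greedy weight of a code (the weight of any greedy `r`-subcode). -/
noncomputable def greedyWt (𝒞 : Submodule F (∀ i : Fin t, Matrix (Fin (m i)) (Fin (n i)) F))
    (r : ℕ) : ℕ :=
  sInf {w | ∃ 𝒟, IsGreedy 𝒞 r 𝒟 ∧ codeWt 𝒟 = w}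

/-- The chain condition: there is a complete flag `0 ⊊ 𝒟_1 ⊊ ⋯ ⊊ 𝒟_k = 𝒞` with
`wt 𝒟_r = d_r(𝒞)` for all `r ∈ [k]`. -/
def ChainCondition (𝒞 : Submodule F (∀ i : Fin t, Matrix (Fin (m i)) (Fin (n i)) F)) : Prop :=
  ∃ 𝒟 : ℕ → Submodule F (∀ i : Fin t, Matrix (Fin (m i)) (Fin (n i)) F),
    𝒟 0 = ⊥ ∧ 𝒟 (Module.finrank F 𝒞) = 𝒞 ∧
    (∀ r, r < Module.finrank F 𝒞 → 𝒟 r < 𝒟 (r + 1)) ∧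
    (∀ r, 1 ≤ r → r ≤ Module.finrank F 𝒞 → codeWt (𝒟 r) = gw 𝒞 r)

/-! ### Auxiliary lemmas -/

section Aux

lemma top_isOptAnticode {a b : ℕ} (hba : b ≤ a) :
    IsOptAnticode (⊤ : Submodule F (Matrix (Fin a) (Fin b) F)) := by
  have hE : ∃ A : Matrix (Fin a) (Fin b) F, A.rank = b := by
    refine ⟨Matrix.of fun i j => if (i : ℕ) = (j : ℕ) then 1 else 0, ?_⟩
    have hinj : Function.Injective (Matrix.mulVecLin
        (Matrix.of fun (i : Fin a) (j : Fin b) => if (i : ℕ) = (j : ℕ) then (1:F) else 0)) := by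
      rw [injective_iff_map_eq_zero]
      intro v hv
      funext j
      have := congrFun hv (Fin.castLE hba j)
      simp only [Matrix.mulVecLin_apply, Matrix.mulVec, dotProduct, Matrix.of_apply,
        Fin.coe_castLE, Pi.zero_apply] at this
      rw [Finset.sum_eq_single j] at this
      · simpa using this
      · intro j' _ hj'
        rw [if_neg (by simpa [Fin.val_eq_val] using (Ne.symm hj')), zero_mul]
      · simp
    rw [Matrix.rank, LinearMap.finrank_range_of_inj hinj]
    simp
  obtain ⟨E, hEr⟩ := hE
  have hmax : maxrank (⊤ : Submodule F (Matrix (Fin a) (Fin b) F)) = b := by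
    unfold maxrank
    apply le_antisymm
    · refine csSup_le ⟨E.rank, ⟨E, trivial, rfl⟩⟩ ?_
      rintro w ⟨A, -, rfl⟩
      simpa using A.rank_le_card_width
    · apply le_csSup
      · exact ⟨b, by rintro w ⟨A, -, rfl⟩; simpa using A.rank_le_card_width⟩
      · exact ⟨E, trivial, hEr⟩
  unfold IsOptAnticode
  rw [hmax, finrank_top, Module.finrank_matrix]
  simp

lemma codeWt_set_nonempty (hmn : ∀ i, n i ≤ m i)
    (𝒟 : Submodule F (∀ i : Fin t, Matrix (Fin (m i)) (Fin (n i)) F)) :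
    {w | ∃ 𝒜 : ∀ i : Fin t, Submodule F (Matrix (Fin (m i)) (Fin (n i)) F),
      (∀ i, IsOptAnticode (𝒜 i)) ∧ 𝒟 ≤ Submodule.pi Set.univ 𝒜 ∧
        maxsrk (Submodule.pi Set.univ 𝒜) = w}.Nonempty := by
  refine ⟨_, fun _ => ⊤, fun i => top_isOptAnticode (hmn i), ?_, rfl⟩
  rw [Submodule.pi_top]
  exact le_top

lemma codeWt_mono (hmn : ∀ i, n i ≤ m i)
    {𝒟' 𝒟 : Submodule F (∀ i : Fin t, Matrix (Fin (m i)) (Fin (n i)) F)} (h : 𝒟' ≤ 𝒟) :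
    codeWt 𝒟' ≤ codeWt 𝒟 := by
  obtain ⟨𝒜, h1, h2, h3⟩ := Nat.sInf_mem (codeWt_set_nonempty hmn 𝒟)
  exact Nat.sInf_le ⟨𝒜, h1, le_trans h h2, h3⟩

lemma gw_le {𝒞 ℰ : Submodule F (∀ i : Fin t, Matrix (Fin (m i)) (Fin (n i)) F)} {r : ℕ}
    (h1 : ℰ ≤ 𝒞) (h2 : r ≤ Module.finrank F ℰ) : gw 𝒞 r ≤ codeWt ℰ :=
  Nat.sInf_le ⟨ℰ, h1, h2, rfl⟩

lemma IsGreedy.le_code {𝒞 𝒟 : Submodule F (∀ i : Fin t, Matrix (Fin (m i)) (Fin (n i)) F)}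
    {r : ℕ} (hr : 1 ≤ r) (h : IsGreedy 𝒞 r 𝒟) : 𝒟 ≤ 𝒞 := by
  match r, h with
  | 1, h => exact h.1
  | (r + 2), h => exact h.1

lemma IsGreedy.finrank_eq {𝒞 𝒟 : Submodule F (∀ i : Fin t, Matrix (Fin (m i)) (Fin (n i)) F)}
    {r : ℕ} (hr : 1 ≤ r) (h : IsGreedy 𝒞 r 𝒟) : Module.finrank F 𝒟 = r := by
  match r, h with
  | 1, h => exact h.2.1
  | (r + 2), h => exact h.2.1

lemma greedy_codeWt_eq {𝒞 𝒟₁ 𝒟₂ : Submodule F (∀ i : Fin t, Matrix (Fin (m i)) (Fin (n i)) F)}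
    {r : ℕ} (hr : 1 ≤ r) (h1 : IsGreedy 𝒞 r 𝒟₁) (h2 : IsGreedy 𝒞 r 𝒟₂) :
    codeWt 𝒟₁ = codeWt 𝒟₂ := by
  match r, h1, h2 with
  | 1, h1, h2 => rw [h1.2.2, h2.2.2]
  | (r + 2), h1, h2 =>
    exact le_antisymm (h1.2.2.2 _ h2.1 h2.2.1 h2.2.2.1) (h2.2.2.2 _ h1.1 h1.2.1 h1.2.2.1)

lemma greedyWt_eq {𝒞 𝒟 : Submodule F (∀ i : Fin t, Matrix (Fin (m i)) (Fin (n i)) F)}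
    {r : ℕ} (hr : 1 ≤ r) (h : IsGreedy 𝒞 r 𝒟) : greedyWt 𝒞 r = codeWt 𝒟 := by
  obtain ⟨𝒟', h', hw⟩ := Nat.sInf_mem (⟨codeWt 𝒟, 𝒟, h, rfl⟩ :
    {w | ∃ 𝒟', IsGreedy 𝒞 r 𝒟' ∧ codeWt 𝒟' = w}.Nonempty)
  show sInf {w | ∃ 𝒟', IsGreedy 𝒞 r 𝒟' ∧ codeWt 𝒟' = w} = codeWt 𝒟
  rw [← hw]
  exact greedy_codeWt_eq hr h' h

lemma exists_extend {𝒞 𝒟 : Submodule F (∀ i : Fin t, Matrix (Fin (m i)) (Fin (n i)) F)}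
    (hle : 𝒟 ≤ 𝒞) (hlt : Module.finrank F 𝒟 < Module.finrank F 𝒞) :
    ∃ ℰ, 𝒟 ≤ ℰ ∧ ℰ ≤ 𝒞 ∧ Module.finrank F ℰ = Module.finrank F 𝒟 + 1 := by
  have hne : 𝒟 < 𝒞 := lt_of_le_of_ne hle (fun h => by rw [h] at hlt; omega)
  obtain ⟨x, hx𝒞, hx𝒟⟩ := SetLike.exists_of_lt hne
  have hx0 : x ≠ 0 := fun h => hx𝒟 (h ▸ 𝒟.zero_mem)
  refine ⟨𝒟 ⊔ Submodule.span F {x}, le_sup_left,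
    sup_le hle ((Submodule.span_singleton_le_iff_mem x 𝒞).mpr hx𝒞), ?_⟩
  have hinf : 𝒟 ⊓ Submodule.span F {x} = ⊥ := by
    rw [eq_bot_iff]
    rintro y ⟨hy𝒟, hyx⟩
    obtain ⟨c, rfl⟩ := Submodule.mem_span_singleton.mp hyx
    rcases eq_or_ne c 0 with rfl | hc
    · simp
    · refine absurd ?_ hx𝒟
      have h2 := 𝒟.smul_mem c⁻¹ hy𝒟
      rwa [smul_smul, inv_mul_cancel₀ hc, one_smul] at h2
  have := Submodule.finrank_sup_add_finrank_inf_eq 𝒟 (Submodule.span F {x})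
  rw [hinf, finrank_span_singleton hx0] at this
  simpa using this

lemma exists_greedy (hmn : ∀ i, n i ≤ m i)
    {𝒞 : Submodule F (∀ i : Fin t, Matrix (Fin (m i)) (Fin (n i)) F)} :
    ∀ r, 1 ≤ r → r ≤ Module.finrank F 𝒞 → ∃ 𝒟, IsGreedy 𝒞 r 𝒟 := by
  intro r
  induction r with
  | zero => omega
  | succ r ih =>
    intro _ hrk
    rcases Nat.eq_zero_or_pos r with rfl | hr1
    · -- greedy 1-subcode
      have hne : {w | ∃ 𝒟 : Submodule F (∀ i : Fin t, Matrix (Fin (m i)) (Fin (n i)) F),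
          𝒟 ≤ 𝒞 ∧ 1 ≤ Module.finrank F 𝒟 ∧ codeWt 𝒟 = w}.Nonempty :=
        ⟨codeWt 𝒞, 𝒞, le_rfl, hrk, rfl⟩
      obtain ⟨𝒟, hle, hfr, hwt⟩ := Nat.sInf_mem hne
      have h𝒟ne : 𝒟 ≠ ⊥ := by
        intro h; rw [h, finrank_bot] at hfr; omega
      obtain ⟨x, hx𝒟, hx0⟩ := (Submodule.ne_bot_iff 𝒟).mp h𝒟ne
      have hsle : Submodule.span F {x} ≤ 𝒟 :=
        (Submodule.span_singleton_le_iff_mem x 𝒟).mpr hx𝒟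
      refine ⟨Submodule.span F {x}, hsle.trans hle, finrank_span_singleton hx0, ?_⟩
      refine le_antisymm ?_ (gw_le (hsle.trans hle) (by rw [finrank_span_singleton hx0]))
      calc codeWt (Submodule.span F {x}) ≤ codeWt 𝒟 := codeWt_mono hmn hsle
        _ = gw 𝒞 1 := hwt
    · -- greedy (r+1)-subcode from greedy r-subcode
      obtain ⟨r', rfl⟩ : ∃ r', r = r' + 1 := ⟨r - 1, by omega⟩
      obtain ⟨𝒟', h𝒟'⟩ := ih (by omega) (by omega)
      have hfr' : Module.finrank F 𝒟' = r' + 1 := h𝒟'.finrank_eq (by omega)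
      obtain ⟨ℰ₀, hle₀, hle𝒞₀, hfr₀⟩ :=
        exists_extend (h𝒟'.le_code (by omega)) (by omega)
      have hne : {w | ∃ ℰ : Submodule F (∀ i : Fin t, Matrix (Fin (m i)) (Fin (n i)) F),
          ℰ ≤ 𝒞 ∧ Module.finrank F ℰ = r' + 2 ∧
          (∃ 𝒟'', IsGreedy 𝒞 (r' + 1) 𝒟'' ∧ 𝒟'' ≤ ℰ) ∧ codeWt ℰ = w}.Nonempty :=
        ⟨codeWt ℰ₀, ℰ₀, hle𝒞₀, by omega, ⟨𝒟', h𝒟', hle₀⟩, rfl⟩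
      obtain ⟨ℰ, h1, h2, h3, h4⟩ := Nat.sInf_mem hne
      refine ⟨ℰ, h1, h2, h3, ?_⟩
      intro ℰ' hE1 hE2 hE3
      rw [h4]
      exact Nat.sInf_le ⟨ℰ', hE1, hE2, hE3, rfl⟩

lemma chain_down {𝒞 : Submodule F (∀ i : Fin t, Matrix (Fin (m i)) (Fin (n i)) F)} :
    ∀ (r : ℕ) (𝒟 : Submodule F (∀ i : Fin t, Matrix (Fin (m i)) (Fin (n i)) F)),
      IsGreedy 𝒞 r 𝒟 → ∃ f : ℕ → Submodule F (∀ i : Fin t, Matrix (Fin (m i)) (Fin (n i)) F),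
        f r = 𝒟 ∧ (∀ s, s ≤ r → IsGreedy 𝒞 s (f s)) ∧ (∀ s, s + 1 ≤ r → f s ≤ f (s + 1)) := by
  intro r
  induction r with
  | zero =>
    intro 𝒟 h
    exact ⟨fun _ => ⊥, h.symm, fun s hs => by interval_cases s; rfl, fun s hs => by omega⟩
  | succ r ih =>
    intro 𝒟 h
    rcases Nat.eq_zero_or_pos r with rfl | hr1
    · refine ⟨fun s => if s = 0 then ⊥ else 𝒟, by simp, ?_, ?_⟩
      · intro s hs
        interval_cases s
        · simp; rfl
        · simpa using h
      · intro s hs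
        have : s = 0 := by omega
        subst this
        simp only [if_pos rfl, if_neg one_ne_zero]
        exact bot_le
    · obtain ⟨r', rfl⟩ : ∃ r', r = r' + 1 := ⟨r - 1, by omega⟩
      obtain ⟨𝒟', h𝒟', hle⟩ := h.2.2.1
      obtain ⟨f', hf'1, hf'2, hf'3⟩ := ih 𝒟' h𝒟'
      refine ⟨fun s => if s = r' + 2 then 𝒟 else f' s, by simp, ?_, ?_⟩
      · intro s hs
        rcases eq_or_ne s (r' + 2) with rfl | hne
        · simpa using h
        · dsimp only
          rw [if_neg hne]
          exact hf'2 s (by omega)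
      · intro s hs
        rcases eq_or_ne (s + 1) (r' + 2) with heq | hne
        · have hs' : s = r' + 1 := by omega
          subst hs'
          dsimp only
          rw [if_neg (by omega), if_pos (by omega), hf'1]
          exact hle
        · dsimp only
          rw [if_neg (by omega), if_neg hne]
          exact hf'3 s (by omega)

end Aux

/-- A sum-rank metric code `𝒞` of dimension `k` satisfies the chain condition if and only if
`d_r(𝒞) = g_r(𝒞)` for all `r ∈ [k]`. -/
theorem chainCondition_iff_greedy (ht : 0 < t)
    (hm_mono : ∀ i j : Fin t, i ≤ j → m j ≤ m i)
    (hn_pos : ∀ i, 0 < n i) (hmn : ∀ i, n i ≤ m i)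
    (𝒞 : Submodule F (∀ i : Fin t, Matrix (Fin (m i)) (Fin (n i)) F)) (k : ℕ)
    (hk : Module.finrank F 𝒞 = k) :
    ChainCondition 𝒞 ↔ ∀ r, 1 ≤ r → r ≤ k → gw 𝒞 r = greedyWt 𝒞 r := by
  subst hk
  constructor
  · rintro ⟨𝒟, h0, hktop, hstrict, hwt⟩ r hr1 hrk
    have hmono : ∀ a b, a ≤ b → b ≤ Module.finrank F 𝒞 → 𝒟 a ≤ 𝒟 b := by
      intro a b hab hbk
      induction b, hab using Nat.le_induction with
      | base => exact le_rfl
      | succ b hb ih => exact (ih (by omega)).trans (hstrict b (by omega)).le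
    have hfrle : ∀ a b, a ≤ b → b ≤ Module.finrank F 𝒞 →
        Module.finrank F (𝒟 a) + (b - a) ≤ Module.finrank F (𝒟 b) := by
      intro a b hab hbk
      induction b, hab using Nat.le_induction with
      | base => simp
      | succ b hb ih =>
        have h1 := Submodule.finrank_lt_finrank_of_lt (hstrict b (by omega))
        have h2 := ih (by omega)
        omega
    have hfr : ∀ r, r ≤ Module.finrank F 𝒞 → Module.finrank F (𝒟 r) = r := by
      intro r hrk
      have h1 := hfrle 0 r (by omega) hrk
      have h2 := hfrle r (Module.finrank F 𝒞) hrk le_rfl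
      rw [h0, finrank_bot] at h1
      rw [hktop] at h2
      omega
    have hgr : ∀ r, 1 ≤ r → r ≤ Module.finrank F 𝒞 → IsGreedy 𝒞 r (𝒟 r) := by
      intro r
      induction r with
      | zero => omega
      | succ r ih =>
        intro h1 hrk
        rcases Nat.eq_zero_or_pos r with rfl | hr1
        · exact ⟨hktop ▸ hmono 1 (Module.finrank F 𝒞) hrk le_rfl, hfr 1 hrk, hwt 1 le_rfl hrk⟩
        · obtain ⟨r', rfl⟩ : ∃ r', r = r' + 1 := ⟨r - 1, by omega⟩
          refine ⟨hktop ▸ hmono (r' + 2) (Module.finrank F 𝒞) hrk le_rfl, hfr _ hrk,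
            ⟨𝒟 (r' + 1), ih (by omega) (by omega), hmono (r' + 1) (r' + 2) (by omega) hrk⟩, ?_⟩
          intro ℰ hE1 hE2 _
          rw [hwt (r' + 2) (by omega) hrk]
          exact gw_le hE1 (by omega)
    rw [greedyWt_eq hr1 (hgr r hr1 hrk), hwt r hr1 hrk]
  · intro H
    rcases Nat.eq_zero_or_pos (Module.finrank F 𝒞) with hk0 | hk1
    · have hbot : 𝒞 = ⊥ := Submodule.finrank_eq_zero.mp hk0
      refine ⟨fun _ => ⊥, rfl, ?_, fun r hr => absurd hr (by omega), fun r h1 h2 => by omega⟩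
      rw [hk0]
      exact hbot.symm
    · obtain ⟨𝒢, h𝒢⟩ := exists_greedy hmn (Module.finrank F 𝒞) hk1 le_rfl
      have h𝒢eq : 𝒢 = 𝒞 :=
        Submodule.eq_of_le_of_finrank_eq (h𝒢.le_code hk1) (h𝒢.finrank_eq hk1)
      obtain ⟨f, hf1, hf2, hf3⟩ := chain_down _ 𝒢 h𝒢
      refine ⟨f, ?_, ?_, ?_, ?_⟩
      · exact hf2 0 (by omega)
      · rw [hf1, h𝒢eq]
      · intro r hr
        have hle := hf3 r hr
        have hA : Module.finrank F (f (r + 1)) = r + 1 := (hf2 (r + 1) hr).finrank_eq (by omega)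
        have hlt : Module.finrank F (f r) < Module.finrank F (f (r + 1)) := by
          rcases Nat.eq_zero_or_pos r with rfl | hr1
          · have hb : f 0 = ⊥ := hf2 0 (by omega)
            rw [hb, finrank_bot, hA]
            omega
          · have hB : Module.finrank F (f r) = r := (hf2 r (by omega)).finrank_eq hr1
            omega
        exact lt_of_le_of_ne hle (fun hh => by rw [hh] at hlt; omega)
      · intro r h1 h2
        have hgwe := greedyWt_eq h1 (hf2 r h2)
        rw [← hgwe]
        exact (H r h1 h2).symm
end

section
/- Let q be a prime power and let 1 ≤ d_1 < d_2 < ... < d_k ≤ n be integers with q ≥ n. Then there exists a k-dimensional linear block code 𝒞 ⊆ F_q^n such that d_r(𝒞) = d_r for all r ∈ [k]. -/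
open Module

variable {F : Type*} [Field F] [Fintype F]

/-- The support of a subspace of `F^n`. -/
def hsupp {n : ℕ} (𝒟 : Submodule F (Fin n → F)) : Set (Fin n) :=
  {i | ∃ x ∈ 𝒟, x i ≠ 0}

/-- The (Hamming) weight of a subspace of `F^n`: the cardinality of its support. -/
noncomputable def hwt {n : ℕ} (𝒟 : Submodule F (Fin n → F)) : ℕ :=
  (hsupp 𝒟).ncard

/-- The `r`-th generalized Hamming weight of a linear block code `𝒞 ⊆ F^n`. -/
noncomputable def hgw {n : ℕ} (𝒞 : Submodule F (Fin n → F)) (r : ℕ) : ℕ :=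
  sInf {w | ∃ 𝒟 : Submodule F (Fin n → F),
    𝒟 ≤ 𝒞 ∧ r ≤ Module.finrank F 𝒟 ∧ hwt 𝒟 = w}

private lemma card_filter_lt_val {n : ℕ} {m : ℕ} (h : m ≤ n) :
    (Finset.univ.filter (fun i : Fin n => i.val < m)).card = m := by
  classical
  have hEq : Finset.univ.filter (fun i : Fin n => i.val < m)
      = Finset.univ.map (Fin.castLEEmb h) := by
    ext i
    simp only [Finset.mem_filter, Finset.mem_univ, true_and, Finset.mem_map]
    constructor
    · intro hi
      exact ⟨⟨i.val, hi⟩, Fin.ext rfl⟩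
    · rintro ⟨a, -, rfl⟩
      simp
  rw [hEq, Finset.card_map, Finset.card_univ, Fintype.card_fin]

/-- Any increasing sequence `1 ≤ d_1 < ⋯ < d_k ≤ n` of positive integers is the sequence of
generalized Hamming weights of a `k`-dimensional linear block code in `F_q^n`, provided
`q ≥ n`. -/
theorem exists_code_with_ghws {n k : ℕ} (hq : n ≤ Fintype.card F)
    (d : Fin k → ℕ) (hmono : StrictMono d) (hpos : ∀ r, 1 ≤ d r) (hlast : ∀ r, d r ≤ n) :
    ∃ 𝒞 : Submodule F (Fin n → F), Module.finrank F 𝒞 = k ∧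
      ∀ r : Fin k, hgw 𝒞 (r.1 + 1) = d r := by
  classical
  obtain ⟨α⟩ : Nonempty (Fin n ↪ F) :=
    Function.Embedding.nonempty_iff_card_le.2 (by simpa using hq)
  -- the evaluation linear map
  set Φ : Polynomial F →ₗ[F] (Fin n → F) :=
    LinearMap.pi (fun i : Fin n => Polynomial.leval (α i)) with hΦ
  have hΦapp : ∀ (p : Polynomial F) (i : Fin n), Φ p i = p.eval (α i) := by
    intro p i; simp [hΦ, Polynomial.leval]
  -- the polynomials
  set f : Fin k → Polynomial F := fun r =>
    ∏ i ∈ Finset.univ.filter (fun i : Fin n => d r ≤ i.val),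
      (Polynomial.X - Polynomial.C (α i)) with hf
  have hmonic : ∀ r, (f r).Monic := by
    intro r
    exact Polynomial.monic_prod_of_monic _ _ (fun i _ => Polynomial.monic_X_sub_C _)
  have hcardge : ∀ r : Fin k,
      (Finset.univ.filter (fun i : Fin n => d r ≤ i.val)).card = n - d r := by
    intro r
    have h1 := Finset.card_filter_add_card_filter_not
      (s := (Finset.univ : Finset (Fin n))) (p := fun i : Fin n => i.val < d r)
    have h2 : (Finset.univ.filter (fun i : Fin n => ¬ i.val < d r))
        = Finset.univ.filter (fun i : Fin n => d r ≤ i.val) := by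
      apply Finset.filter_congr
      intro i _
      simp [not_lt]
    rw [h2] at h1
    have h3 := card_filter_lt_val (n := n) (hlast r)
    have h4 : (Finset.univ : Finset (Fin n)).card = n := by simp
    omega
  have hdeg : ∀ r, (f r).natDegree = n - d r := by
    intro r
    rw [hf]
    rw [Polynomial.natDegree_prod _ _ (fun i _ => Polynomial.X_sub_C_ne_zero (α i))]
    simp [hcardge r]
  -- the vectors
  set v : Fin k → (Fin n → F) := fun r => Φ (f r) with hv
  have hveval : ∀ (r : Fin k) (i : Fin n), v r i = (f r).eval (α i) := by
    intro r i; rw [hv]; exact hΦapp _ _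
  have hv0 : ∀ (r : Fin k) (i : Fin n), d r ≤ i.val → v r i = 0 := by
    intro r i hi
    rw [hveval, hf]
    simp only [Polynomial.eval_prod]
    apply Finset.prod_eq_zero (i := i)
    · simp [hi]
    · simp
  have hvne : ∀ (r : Fin k) (i : Fin n), i.val < d r → v r i ≠ 0 := by
    intro r i hi
    rw [hveval, hf]
    simp only [Polynomial.eval_prod]
    rw [Finset.prod_ne_zero_iff]
    intro j hj
    simp only [Finset.mem_filter, Finset.mem_univ, true_and] at hj
    have hij : i ≠ j := by
      intro h; rw [h] at hi; omega
    simp only [Polynomial.eval_sub, Polynomial.eval_X, Polynomial.eval_C]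
    exact sub_ne_zero.2 (fun h => hij (α.injective h))
  -- independence of the polynomials
  have hindf : ∀ c : Fin k → F, (∑ j, c j • f j) = 0 → ∀ j, c j = 0 := by
    intro c hc
    by_contra hex
    push_neg at hex
    obtain ⟨j, hj⟩ := hex
    set s := Finset.univ.filter (fun j : Fin k => c j ≠ 0) with hs
    have hsne : s.Nonempty := ⟨j, by simp [hs, hj]⟩
    set j0 := s.min' hsne with hj0def
    have hj0s : j0 ∈ s := s.min'_mem hsne
    have hj0 : c j0 ≠ 0 := by
      simpa [hs] using hj0s
    have hco := congrArg (fun p : Polynomial F => p.coeff (n - d j0)) hc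
    simp only [Polynomial.finset_sum_coeff, Polynomial.coeff_smul, smul_eq_mul,
      Polynomial.coeff_zero] at hco
    rw [Finset.sum_eq_single j0] at hco
    · rw [← hdeg j0, (hmonic j0).coeff_natDegree, mul_one] at hco
      exact hj0 hco
    · intro b _ hb
      by_cases hcb : c b = 0
      · rw [hcb, zero_mul]
      · have hbs : b ∈ s := by simp [hs, hcb]
        have hleb : j0 ≤ b := s.min'_le b hbs
        have hlt : j0 < b := lt_of_le_of_ne hleb (Ne.symm hb)
        have hdlt : d j0 < d b := hmono hlt
        have : (f b).natDegree < n - d j0 := by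
          rw [hdeg b]
          have := hlast b
          omega
        rw [Polynomial.coeff_eq_zero_of_natDegree_lt this, mul_zero]
    · intro h
      exact absurd (Finset.mem_univ j0) h
  -- independence of the vectors
  have hindv : LinearIndependent F v := by
    rw [Fintype.linearIndependent_iff]
    intro c hc j
    have hn1 : 1 ≤ n := le_trans (hpos j) (hlast j)
    set g : Polynomial F := ∑ j, c j • f j with hg
    have hΦg : Φ g = 0 := by
      rw [hg, map_sum]
      simpa [hv, map_smul] using hc
    have hdegg : g.natDegree < n := by
      have : g.natDegree ≤ n - 1 := by
        rw [hg]
        apply Polynomial.natDegree_sum_le_of_forall_le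
        intro i _
        refine le_trans (Polynomial.natDegree_smul_le _ _) ?_
        rw [hdeg i]
        have := hpos i
        omega
      omega
    have hgz : g = 0 := by
      apply Polynomial.eq_zero_of_natDegree_lt_card_of_eval_eq_zero g α.injective
      · intro i
        have := congrFun hΦg i
        rwa [hΦapp] at this
      · simpa using hdegg
    exact hindf c hgz j
  -- the code
  refine ⟨Submodule.span F (Set.range v), ?_, ?_⟩
  · rw [finrank_span_eq_card hindv, Fintype.card_fin]
  intro r
  have hr1 : r.1 + 1 ≤ k := r.isLt
  -- the bottom subfamily
  set low : Fin (r.1 + 1) → Fin k := fun t => Fin.castLE hr1 t with hlow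
  have hlowinj : Function.Injective low := fun a b hab => by
    apply Fin.ext
    simpa [hlow] using congrArg Fin.val hab
  set Dr := Submodule.span F (Set.range (v ∘ low)) with hDr
  have hDr_le : Dr ≤ Submodule.span F (Set.range v) :=
    Submodule.span_mono (Set.range_comp_subset_range _ _)
  have hDr_rk : finrank F Dr = r.1 + 1 := by
    rw [hDr, finrank_span_eq_card (hindv.comp low hlowinj), Fintype.card_fin]
  have hDr_sub : ∀ x ∈ Dr, ∀ i : Fin n, d r ≤ i.val → x i = 0 := by
    intro x hx i hi
    induction hx using Submodule.span_induction with
    | mem y hy =>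
      obtain ⟨t, rfl⟩ := hy
      apply hv0
      have : d (low t) ≤ d r := by
        apply hmono.monotone
        rw [Fin.le_def]
        have := t.isLt
        simp only [hlow, Fin.coe_castLE]
        omega
      omega
    | zero => rfl
    | add y z _ _ hy hz => simp [hy, hz]
    | smul a y _ hy => simp [hy]
  have hDr_supp : hsupp Dr = {i : Fin n | i.val < d r} := by
    ext i
    constructor
    · rintro ⟨x, hx, hxi⟩
      by_contra hcon
      exact hxi (hDr_sub x hx i (not_lt.1 hcon))
    · intro hi
      refine ⟨v r, ?_, hvne r i hi⟩
      apply Submodule.subset_span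
      exact ⟨⟨r.1, Nat.lt_succ_self _⟩, congrArg v (Fin.ext rfl)⟩
  have hDr_wt : hwt Dr = d r := by
    rw [hwt, hDr_supp]
    have : {i : Fin n | i.val < d r}
        = ↑(Finset.univ.filter (fun i : Fin n => i.val < d r)) := by
      ext i; simp
    rw [this, Set.ncard_coe_finset, card_filter_lt_val (hlast r)]
  have hmem : d r ∈ {w | ∃ 𝒟 : Submodule F (Fin n → F),
      𝒟 ≤ Submodule.span F (Set.range v) ∧ r.1 + 1 ≤ Module.finrank F 𝒟 ∧ hwt 𝒟 = w} :=
    ⟨Dr, hDr_le, le_of_eq hDr_rk.symm, hDr_wt⟩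
  -- lower bound
  have hlb : ∀ w ∈ {w | ∃ 𝒟 : Submodule F (Fin n → F),
      𝒟 ≤ Submodule.span F (Set.range v) ∧ r.1 + 1 ≤ Module.finrank F 𝒟 ∧ hwt 𝒟 = w},
      d r ≤ w := by
    rintro w ⟨𝒟, hle, hrk, rfl⟩
    -- the top subfamily
    set top : Fin (k - r.1) → Fin k := fun t => ⟨r.1 + t.1, by have := t.isLt; omega⟩
      with htop
    have htopinj : Function.Injective top := fun a b hab => by
      apply Fin.ext
      have := congrArg Fin.val hab
      simp only [htop] at this
      omega
    set Tr := Submodule.span F (Set.range (v ∘ top)) with hTr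
    have hTr_le : Tr ≤ Submodule.span F (Set.range v) :=
      Submodule.span_mono (Set.range_comp_subset_range _ _)
    have hTr_rk : finrank F Tr = k - r.1 := by
      rw [hTr, finrank_span_eq_card (hindv.comp top htopinj), Fintype.card_fin]
    have hsup_le : finrank F ↥(𝒟 ⊔ Tr) ≤ k := by
      have h1 : 𝒟 ⊔ Tr ≤ Submodule.span F (Set.range v) := sup_le hle hTr_le
      have h2 := Submodule.finrank_mono h1
      rw [finrank_span_eq_card hindv, Fintype.card_fin] at h2
      exact h2
    have heq := Submodule.finrank_sup_add_finrank_inf_eq 𝒟 Tr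
    have hinf_pos : 0 < finrank F ↥(𝒟 ⊓ Tr) := by
      have hrlt := r.isLt
      omega
    obtain ⟨x, hxmem, hx0⟩ := Submodule.exists_mem_ne_zero_of_ne_bot
      (p := 𝒟 ⊓ Tr) (by
        intro hbot
        rw [hbot, finrank_bot] at hinf_pos
        exact lt_irrefl 0 hinf_pos)
    have hxD : x ∈ 𝒟 := hxmem.1
    have hxT : x ∈ Tr := hxmem.2
    -- pull back x to a polynomial of low degree
    have hTr_map : Tr = Submodule.map Φ (Submodule.span F (Set.range (f ∘ top))) := by
      rw [Submodule.map_span, hTr]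
      congr 1
      rw [← Set.range_comp]
      rfl
    rw [hTr_map] at hxT
    obtain ⟨g, hgP, hgx⟩ := hxT
    have hPdeg : ∀ p ∈ Submodule.span F (Set.range (f ∘ top)), p.natDegree ≤ n - d r := by
      intro p hp
      induction hp using Submodule.span_induction with
      | mem y hy =>
        obtain ⟨t, rfl⟩ := hy
        simp only [Function.comp_apply]
        rw [hdeg]
        have : d r ≤ d (top t) := by
          apply hmono.monotone
          rw [Fin.le_def]
          simp [htop]
        omega
      | zero => simp
      | add y z _ _ hy hz =>
        exact le_trans (Polynomial.natDegree_add_le _ _) (max_le hy hz)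
      | smul a y _ hy => exact le_trans (Polynomial.natDegree_smul_le _ _) hy
    have hgdeg : g.natDegree ≤ n - d r := hPdeg g hgP
    have hg0 : g ≠ 0 := by
      intro h
      rw [h, map_zero] at hgx
      exact hx0 hgx.symm
    have hxi : ∀ i : Fin n, x i = g.eval (α i) := by
      intro i
      rw [← hgx, hΦapp]
    -- count the zeros of g among the α i
    set Zg := Finset.univ.filter (fun i : Fin n => g.eval (α i) = 0) with hZg
    have hZg_card : Zg.card ≤ n - d r := by
      calc Zg.card = (Zg.image α).card :=
            (Finset.card_image_of_injective _ α.injective).symm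
        _ ≤ g.roots.toFinset.card := by
            apply Finset.card_le_card
            intro y hy
            simp only [Finset.mem_image] at hy
            obtain ⟨i, hi, rfl⟩ := hy
            simp only [hZg, Finset.mem_filter, Finset.mem_univ, true_and] at hi
            rw [Multiset.mem_toFinset, Polynomial.mem_roots hg0]
            exact hi
        _ ≤ Multiset.card g.roots := Multiset.toFinset_card_le _
        _ ≤ g.natDegree := Polynomial.card_roots' g
        _ ≤ n - d r := hgdeg
    set Ng := Finset.univ.filter (fun i : Fin n => x i ≠ 0) with hNg
    have hNg_card : d r ≤ Ng.card := by
      have hsplit : Zg.card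
          + (Finset.univ.filter (fun i : Fin n => ¬ g.eval (α i) = 0)).card = n := by
        rw [hZg]
        rw [Finset.card_filter_add_card_filter_not]
        simp
      have hNgeq : Finset.univ.filter (fun i : Fin n => ¬ g.eval (α i) = 0) = Ng := by
        rw [hNg]
        apply Finset.filter_congr
        intro i _
        simp [hxi i]
      rw [hNgeq] at hsplit
      have hdr := hlast r
      omega
    -- conclude
    have hsub : (↑Ng : Set (Fin n)) ⊆ hsupp 𝒟 := by
      intro i hi
      simp only [hNg, Finset.coe_filter, Set.mem_setOf_eq, Finset.mem_univ, true_and] at hi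
      exact ⟨x, hxD, hi⟩
    calc d r ≤ Ng.card := hNg_card
      _ = (↑Ng : Set (Fin n)).ncard := (Set.ncard_coe_finset _).symm
      _ ≤ (hsupp 𝒟).ncard := Set.ncard_le_ncard hsub (Set.toFinite _)
      _ = hwt 𝒟 := rfl
  exact le_antisymm (Nat.sInf_le hmem) (le_csInf ⟨_, hmem⟩ hlb)
end

section
/- Let q be a prime power and let 1 ≤ d_1 < d_2 < ... < d_k ≤ n be integers with q ≥ n. Then there exists a k-dimensional linear block code 𝒞 ⊆ F_q^n together with a chain of subcodes 0 ⊊ 𝒟_1 ⊊ 𝒟_2 ⊊ ... ⊊ 𝒟_k = 𝒞 such that for all r ∈ [k] one has d_r(𝒞) = |supp(𝒟_r)| = d_r; in particular 𝒞 satisfies the chain condition and g_r(𝒞) = d_r for all r ∈ [k]. -/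
open Module

variable {F : Type*} [Field F] [Fintype F]

/-- Greedy `r`-subcodes of a linear block code. -/
def IsGreedyH {n : ℕ} (𝒞 : Submodule F (Fin n → F)) : ℕ → Submodule F (Fin n → F) → Prop
  | 0, 𝒟 => 𝒟 = ⊥
  | 1, 𝒟 => 𝒟 ≤ 𝒞 ∧ Module.finrank F 𝒟 = 1 ∧ hwt 𝒟 = hgw 𝒞 1
  | (r + 2), 𝒟 => 𝒟 ≤ 𝒞 ∧ Module.finrank F 𝒟 = r + 2 ∧
      (∃ 𝒟', IsGreedyH 𝒞 (r + 1) 𝒟' ∧ 𝒟' ≤ 𝒟) ∧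
      (∀ ℰ : Submodule F (Fin n → F), ℰ ≤ 𝒞 → Module.finrank F ℰ = r + 2 →
        (∃ 𝒟', IsGreedyH 𝒞 (r + 1) 𝒟' ∧ 𝒟' ≤ ℰ) → hwt 𝒟 ≤ hwt ℰ)

/-- The `r`-th greedy weight of a linear block code. -/
noncomputable def hgreedyWt {n : ℕ} (𝒞 : Submodule F (Fin n → F)) (r : ℕ) : ℕ :=
  sInf {w | ∃ 𝒟, IsGreedyH 𝒞 r 𝒟 ∧ hwt 𝒟 = w}

/-- The chain condition for a linear block code. -/
def ChainConditionH {n : ℕ} (𝒞 : Submodule F (Fin n → F)) : Prop :=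
  ∃ 𝒟 : ℕ → Submodule F (Fin n → F),
    𝒟 0 = ⊥ ∧ 𝒟 (Module.finrank F 𝒞) = 𝒞 ∧
    (∀ r, r < Module.finrank F 𝒞 → 𝒟 r < 𝒟 (r + 1)) ∧
    (∀ r, 1 ≤ r → r ≤ Module.finrank F 𝒞 → hwt (𝒟 r) = hgw 𝒞 r)

set_option linter.unusedSectionVars false
private lemma hsupp_span_subset {n : ℕ} (S : Set (Fin n → F)) :
    hsupp (Submodule.span F S) ⊆ {i | ∃ x ∈ S, x i ≠ 0} := by
  rintro i ⟨x, hx, hxi⟩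
  refine Submodule.span_induction (p := fun x _ => x i ≠ 0 → ∃ y ∈ S, y i ≠ 0)
    (fun y hy h => ⟨y, hy, h⟩) (fun h => absurd rfl h)
    (fun a b _ _ ha hb h => ?_) (fun c a _ ha h => ?_) hx hxi
  · by_cases h1 : a i ≠ 0
    · exact ha h1
    · refine hb fun h2 => h ?_
      push_neg at h1
      simp [Pi.add_apply, h1, h2]
  · refine ha fun h2 => h ?_
    simp [Pi.smul_apply, h2]

private lemma card_filter_lt {n a : ℕ} (ha : a ≤ n) :
    (Finset.univ.filter (fun i : Fin n => (i : ℕ) < a)).card = a := by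
  rw [← Finset.card_image_of_injective _ Fin.val_injective]
  have : (Finset.univ.filter (fun i : Fin n => (i : ℕ) < a)).image Fin.val
      = Finset.range a := by
    ext j
    simp only [Finset.mem_image, Finset.mem_filter, Finset.mem_univ, true_and,
      Finset.mem_range]
    exact ⟨fun ⟨i, hi, he⟩ => he ▸ hi, fun hj => ⟨⟨j, lt_of_lt_of_le hj ha⟩, hj, rfl⟩⟩
  rw [this, Finset.card_range]

private lemma card_filter_ico {n a b : ℕ} (hb : b ≤ n) :
    (Finset.univ.filter (fun i : Fin n => a ≤ (i : ℕ) ∧ (i : ℕ) < b)).card = b - a := by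
  rw [← Finset.card_image_of_injective _ Fin.val_injective]
  have : (Finset.univ.filter (fun i : Fin n => a ≤ (i : ℕ) ∧ (i : ℕ) < b)).image Fin.val
      = Finset.Ico a b := by
    ext j
    simp only [Finset.mem_image, Finset.mem_filter, Finset.mem_univ, true_and,
      Finset.mem_Ico]
    exact ⟨fun ⟨i, hi, he⟩ => he ▸ hi,
      fun hj => ⟨⟨j, lt_of_lt_of_le hj.2 hb⟩, hj, rfl⟩⟩
  rw [this, Nat.card_Ico]

open Polynomial in
private lemma card_le_natDegree_of_eval_zero {n : ℕ} {α : Fin n ↪ F}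
    {f : F[X]} (hf : f ≠ 0) (s : Finset (Fin n)) (hs : ∀ i ∈ s, f.eval (α i) = 0) :
    s.card ≤ f.natDegree := by
  classical
  have h1 : s.image α ⊆ f.roots.toFinset := by
    intro x hx
    simp only [Finset.mem_image] at hx
    obtain ⟨i, hi, rfl⟩ := hx
    simp only [Multiset.mem_toFinset, mem_roots', IsRoot.def]
    exact ⟨hf, hs i hi⟩
  calc s.card = (s.image α).card := (Finset.card_image_of_injective s α.injective).symm
    _ ≤ f.roots.toFinset.card := Finset.card_le_card h1
    _ ≤ Multiset.card f.roots := f.roots.toFinset_card_le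
    _ ≤ f.natDegree := f.card_roots'

open Polynomial in
private noncomputable def evalL {n : ℕ} (α : Fin n → F) (m : ℕ) :
    F[X] →ₗ[F] (Fin n → F) where
  toFun f := fun i => if (i : ℕ) < m then f.eval (α i) else 0
  map_add' f g := by funext i; by_cases h : (i : ℕ) < m <;> simp [h]
  map_smul' c f := by funext i; by_cases h : (i : ℕ) < m <;> simp [h]

/-- Any increasing sequence `1 ≤ d_1 < ⋯ < d_k ≤ n` is realized as the sequence of generalized
Hamming weights of a `k`-dimensional code `𝒞 ⊆ F_q^n` (for `q ≥ n`) together with a chain of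
subcodes `0 ⊊ 𝒟_1 ⊊ ⋯ ⊊ 𝒟_k = 𝒞` with `d_r(𝒞) = |supp 𝒟_r| = d_r`; in particular `𝒞`
satisfies the chain condition and `g_r(𝒞) = d_r` for all `r ∈ [k]`. -/
theorem exists_code_with_ghws_and_chain {n k : ℕ} (hq : n ≤ Fintype.card F)
    (d : Fin k → ℕ) (hmono : StrictMono d) (hpos : ∀ r, 1 ≤ d r) (hlast : ∀ r, d r ≤ n) :
    ∃ 𝒞 : Submodule F (Fin n → F), ∃ 𝒟 : ℕ → Submodule F (Fin n → F),
      Module.finrank F 𝒞 = k ∧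
      𝒟 0 = ⊥ ∧ 𝒟 k = 𝒞 ∧ (∀ r, r < k → 𝒟 r < 𝒟 (r + 1)) ∧
      (∀ r : Fin k, hgw 𝒞 (r.1 + 1) = d r ∧ hwt (𝒟 (r.1 + 1)) = d r) ∧
      ChainConditionH 𝒞 ∧
      (∀ r : Fin k, hgreedyWt 𝒞 (r.1 + 1) = d r) := by
  classical
  rcases k with _ | K
  · refine ⟨⊥, fun _ => ⊥, finrank_bot F _, rfl, rfl,
      fun r hr => absurd hr (Nat.not_lt_zero r), fun r => r.elim0, ?_, fun r => r.elim0⟩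
    refine ⟨fun _ => ⊥, rfl, by rw [finrank_bot], ?_, ?_⟩
    · intro r hr; rw [finrank_bot] at hr; exact absurd hr (Nat.not_lt_zero r)
    · intro r h1 h2; rw [finrank_bot] at h2; exact absurd (h1.trans h2) (by omega)
  -- main case
  set m : ℕ := d (Fin.last K) with hmdef
  have hm : m ≤ n := hlast _
  have hdm : ∀ r : Fin (K+1), d r ≤ m := fun r => hmono.monotone (Fin.le_last r)
  obtain ⟨α⟩ : Nonempty (Fin n ↪ F) :=
    Function.Embedding.nonempty_of_card_le (by simpa using hq)
  set p : Fin (K+1) → Polynomial F := fun r =>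
    ∏ i ∈ Finset.univ.filter (fun i : Fin n => d r ≤ (i : ℕ) ∧ (i : ℕ) < m),
      (Polynomial.X - Polynomial.C (α i)) with hpdef
  have hpdeg : ∀ r, (p r).natDegree = m - d r := by
    intro r
    simp only [hpdef]
    rw [Polynomial.natDegree_prod_of_monic _ _ fun i _ => Polynomial.monic_X_sub_C _]
    simp only [Polynomial.natDegree_X_sub_C, Finset.sum_const, smul_eq_mul, mul_one]
    exact card_filter_ico hm
  set L := evalL (F := F) (fun i => α i) m with hL
  set v : Fin (K+1) → (Fin n → F) := fun r => L (p r) with hv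
  have hvlt : ∀ (r : Fin (K+1)) (i : Fin n), (i : ℕ) < m → v r i = (p r).eval (α i) := by
    intro r i h
    simp only [hv, hL, evalL, LinearMap.coe_mk, AddHom.coe_mk, if_pos h]
  have hvge : ∀ (r : Fin (K+1)) (i : Fin n), ¬ ((i : ℕ) < m) → v r i = 0 := by
    intro r i h
    simp only [hv, hL, evalL, LinearMap.coe_mk, AddHom.coe_mk, if_neg h]
  have hsupp_v : ∀ (r : Fin (K+1)) (i : Fin n), v r i ≠ 0 → (i : ℕ) < d r := by
    intro r i h
    by_contra hge
    push_neg at hge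
    by_cases him : (i : ℕ) < m
    · apply h
      rw [hvlt r i him]
      simp only [hpdef, Polynomial.eval_prod]
      refine Finset.prod_eq_zero
        (Finset.mem_filter.mpr ⟨Finset.mem_univ i, hge, him⟩) ?_
      simp
    · exact h (hvge r i him)
  have hv_ne : ∀ (r : Fin (K+1)) (i : Fin n), (i : ℕ) < d r → v r i ≠ 0 := by
    intro r i hi
    have him : (i : ℕ) < m := lt_of_lt_of_le hi (hdm r)
    rw [hvlt r i him]
    simp only [hpdef, Polynomial.eval_prod]
    rw [Finset.prod_ne_zero_iff]
    intro t ht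
    simp only [Finset.mem_filter, Finset.mem_univ, true_and] at ht
    simp only [Polynomial.eval_sub, Polynomial.eval_X, Polynomial.eval_C]
    rw [sub_ne_zero]
    intro he
    have hit : i = t := α.injective he
    rw [hit] at hi
    exact absurd hi (not_lt.mpr ht.1)
  have hvind : LinearIndependent F v := by
    rw [linearIndependent_iff']
    intro s c hsum j hj
    by_contra hcj
    have hTne : (s.filter (fun i => c i ≠ 0)).Nonempty :=
      ⟨j, Finset.mem_filter.mpr ⟨hj, hcj⟩⟩
    set T := s.filter (fun i => c i ≠ 0) with hT
    set jm := T.max' hTne with hjm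
    have hjmT : jm ∈ T := T.max'_mem hTne
    have hjms : jm ∈ s := (Finset.mem_filter.mp hjmT).1
    have hcjm : c jm ≠ 0 := (Finset.mem_filter.mp hjmT).2
    have hd1 : 1 ≤ d jm := hpos jm
    have hen : d jm - 1 < n := by have := hlast jm; omega
    set e : Fin n := ⟨d jm - 1, hen⟩ with he
    have h0 : (∑ i ∈ s, c i • v i) e = 0 := by rw [hsum]; rfl
    rw [Finset.sum_apply] at h0
    have hsingle : ∑ i ∈ s, (c i • v i) e = c jm * v jm e := by
      refine Finset.sum_eq_single_of_mem jm hjms ?_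
      intro i hi hne
      by_cases hci : c i = 0
      · simp [hci]
      · have hiT : i ∈ T := Finset.mem_filter.mpr ⟨hi, hci⟩
        have hilt : i < jm := lt_of_le_of_ne (T.le_max' i hiT) hne
        have hdi : d i < d jm := hmono hilt
        have hnlt : ¬ ((e : ℕ) < d i) := by
          simp only [he]
          omega
        have hv0 : v i e = 0 := by
          by_contra h
          exact hnlt (hsupp_v i e h)
        simp [hv0]
    rw [hsingle] at h0
    have hvjm : v jm e ≠ 0 := hv_ne jm e (by simp only [he]; omega)
    rcases mul_eq_zero.mp h0 with h | h
    · exact hcjm h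
    · exact hvjm h
  set 𝒞 : Submodule F (Fin n → F) := Submodule.span F (Set.range v) with h𝒞
  have h𝒞rank : finrank F 𝒞 = K + 1 := by
    rw [show 𝒞 = Submodule.span F (Set.range v) from h𝒞, finrank_span_eq_card hvind, Fintype.card_fin]
  set 𝒟 : ℕ → Submodule F (Fin n → F) :=
    fun t => Submodule.span F (v '' {j : Fin (K+1) | (j : ℕ) < t}) with h𝒟
  have h𝒟0 : 𝒟 0 = ⊥ := by
    have hs0 : {j : Fin (K+1) | (j : ℕ) < 0} = ∅ := by ext j; simp
    simp only [h𝒟]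
    simp [hs0]
  have h𝒟top : 𝒟 (K+1) = 𝒞 := by
    have hsu : {j : Fin (K+1) | (j : ℕ) < K+1} = Set.univ := by
      ext j; simpa using j.isLt
    simp only [h𝒟, h𝒞]
    rw [hsu, Set.image_univ]
  have h𝒟le : ∀ t, 𝒟 t ≤ 𝒞 := by
    intro t
    refine Submodule.span_mono ?_
    rintro x ⟨j, -, rfl⟩
    exact Set.mem_range_self j
  have h𝒟rank : ∀ t, (ht : t ≤ K+1) → finrank F (𝒟 t) = t := by
    intro t ht
    have hsetr : {j : Fin (K+1) | (j : ℕ) < t} = Set.range (Fin.castLE ht) := by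
      ext j
      simp only [Set.mem_setOf_eq, Set.mem_range]
      constructor
      · intro hjt
        exact ⟨⟨(j : ℕ), hjt⟩, by ext; simp⟩
      · rintro ⟨i, rfl⟩
        simpa using i.isLt
    show finrank F ↥(Submodule.span F (v '' {j : Fin (K+1) | (j : ℕ) < t})) = t
    rw [hsetr, ← Set.range_comp,
      finrank_span_eq_card (hvind.comp _ (Fin.castLE_injective ht)), Fintype.card_fin]
  have h𝒟lt : ∀ t, t < K+1 → 𝒟 t < 𝒟 (t+1) := by
    intro t ht
    have hle : 𝒟 t ≤ 𝒟 (t+1) :=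
      Submodule.span_mono (Set.image_mono fun j hj => Nat.lt_succ_of_lt hj)
    refine lt_of_le_of_ne hle fun heq => ?_
    have hmem : v ⟨t, ht⟩ ∈ 𝒟 (t+1) :=
      Submodule.subset_span ⟨⟨t, ht⟩, by simp, rfl⟩
    rw [← heq] at hmem
    exact hvind.notMem_span_image
      (by simp : (⟨t, ht⟩ : Fin (K+1)) ∉ {j : Fin (K+1) | (j : ℕ) < t}) hmem
  have hsupp𝒟 : ∀ r : Fin (K+1), hsupp (𝒟 (r.1+1)) = {i : Fin n | (i : ℕ) < d r} := by
    intro r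
    apply Set.Subset.antisymm
    · intro i hi
      obtain ⟨x, ⟨j, hj, rfl⟩, hxi⟩ := hsupp_span_subset _ hi
      have hidj : (i : ℕ) < d j := hsupp_v j i hxi
      have hjr : j ≤ r := by
        have hjr' : (j : ℕ) < r.1 + 1 := hj
        exact Fin.le_def.mpr (by omega)
      exact lt_of_lt_of_le hidj (hmono.monotone hjr)
    · intro i hi
      exact ⟨v r, Submodule.subset_span ⟨r, by simp, rfl⟩, hv_ne r i hi⟩
  have hwt𝒟 : ∀ r : Fin (K+1), hwt (𝒟 (r.1+1)) = d r := by
    intro r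
    rw [hwt, hsupp𝒟 r]
    have hc : {i : Fin n | (i : ℕ) < d r}
        = ↑(Finset.univ.filter (fun i : Fin n => (i : ℕ) < d r)) := by
      ext i; simp
    rw [hc, Set.ncard_coe_finset, card_filter_lt (hlast r)]
  have hsupp𝒞 : hsupp 𝒞 ⊆ {i : Fin n | (i : ℕ) < m} := by
    intro i hi
    obtain ⟨x, ⟨j, rfl⟩, hxi⟩ := hsupp_span_subset _ hi
    exact lt_of_lt_of_le (hsupp_v j i hxi) (hdm j)
  -- the key lower bound
  have hlow : ∀ (r : Fin (K+1)) (E : Submodule F (Fin n → F)), E ≤ 𝒞 →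
      r.1 + 1 ≤ finrank F E → d r ≤ hwt E := by
    intro r E hE hrE
    set g : Fin (K + 1 - r.1) → Fin (K+1) := fun j => ⟨r.1 + j.1, by omega⟩ with hg
    have hginj : Function.Injective g := by
      intro a b hab
      have hab' : r.1 + a.1 = r.1 + b.1 := congrArg Fin.val hab
      exact Fin.ext (by omega)
    set U : Submodule F (Fin n → F) := Submodule.span F (Set.range (v ∘ g)) with hU
    have hUrank : finrank F U = K + 1 - r.1 := by
      rw [show U = Submodule.span F (Set.range (v ∘ g)) from hU,
        finrank_span_eq_card (hvind.comp g hginj), Fintype.card_fin]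
    have hU𝒞 : U ≤ 𝒞 := by
      refine Submodule.span_mono ?_
      rintro x ⟨j, rfl⟩
      exact Set.mem_range_self _
    have hsup : finrank F ↥(E ⊔ U) ≤ K + 1 := by
      rw [← h𝒞rank]
      exact Submodule.finrank_mono (sup_le hE hU𝒞)
    have hinf : 0 < finrank F ↥(E ⊓ U) := by
      have hh := Submodule.finrank_sup_add_finrank_inf_eq E U
      omega
    have hne : E ⊓ U ≠ ⊥ := by
      intro hb
      rw [hb] at hinf
      simp [finrank_bot] at hinf
    obtain ⟨x, hxEU, hx0⟩ := Submodule.exists_mem_ne_zero_of_ne_bot hne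
    obtain ⟨hxE, hxU⟩ := Submodule.mem_inf.mp hxEU
    have hxU' : x ∈ Submodule.map L (Submodule.span F (Set.range (p ∘ g))) := by
      rw [Submodule.map_span, ← Set.range_comp]
      exact hxU
    obtain ⟨f, hfspan, hfx⟩ := Submodule.mem_map.mp hxU'
    have hf0 : f ≠ 0 := fun h => hx0 (by rw [← hfx, h, map_zero])
    have hfdeg : f.natDegree < m - d r + 1 := by
      have hmem : f ∈ Polynomial.degreeLT F (m - d r + 1) := by
        refine Submodule.span_le.mpr ?_ hfspan
        rintro _ ⟨j, rfl⟩
        rw [SetLike.mem_coe, Polynomial.mem_degreeLT]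
        have h1 : (p (g j)).natDegree ≤ m - d r := by
          rw [hpdeg]
          have hrg : d r ≤ d (g j) := by
            refine hmono.monotone ?_
            rw [Fin.le_def]
            simp [hg]
          omega
        calc (p (g j)).degree ≤ ((p (g j)).natDegree : WithBot ℕ) :=
            Polynomial.degree_le_natDegree
          _ < ((m - d r + 1 : ℕ) : WithBot ℕ) := by
            exact_mod_cast Nat.lt_succ_of_le h1
      exact (Polynomial.natDegree_lt_iff_degree_lt hf0).mpr (Polynomial.mem_degreeLT.mp hmem)
    set s : Finset (Fin n) :=
      Finset.univ.filter (fun i => (i : ℕ) < m ∧ i ∉ hsupp E) with hs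
    have hscard : s.card ≤ m - d r := by
      have hz : ∀ i ∈ s, f.eval (α i) = 0 := by
        intro i hi
        rw [hs, Finset.mem_filter] at hi
        obtain ⟨-, him, hins⟩ := hi
        have hxi : x i = 0 := by
          by_contra h
          exact hins ⟨x, hxE, h⟩
        rw [← hfx] at hxi
        simpa only [hL, evalL, LinearMap.coe_mk, AddHom.coe_mk, if_pos him] using hxi
      have hcard := card_le_natDegree_of_eval_zero (α := α) hf0 s hz
      omega
    have hsuppE : hsupp E ⊆ {i : Fin n | (i : ℕ) < m} := by
      intro i hi
      obtain ⟨y, hy, hyi⟩ := hi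
      exact hsupp𝒞 ⟨y, hE hy, hyi⟩
    have hwtE : hwt E = (Finset.univ.filter (fun i : Fin n => i ∈ hsupp E)).card := by
      have hc : hsupp E = ↑(Finset.univ.filter (fun i : Fin n => i ∈ hsupp E)) := by
        ext i; simp
      rw [hwt]
      conv_lhs => rw [hc]
      rw [Set.ncard_coe_finset]
    have h1 := Finset.card_filter_add_card_filter_not
      (s := Finset.univ.filter (fun i : Fin n => (i : ℕ) < m)) (p := fun i => i ∈ hsupp E)
    rw [Finset.filter_filter, Finset.filter_filter] at h1
    have e1 : Finset.univ.filter (fun i : Fin n => (i : ℕ) < m ∧ i ∈ hsupp E)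
        = Finset.univ.filter (fun i : Fin n => i ∈ hsupp E) := by
      ext i
      simp only [Finset.mem_filter, Finset.mem_univ, true_and]
      exact ⟨fun h => h.2, fun h => ⟨hsuppE h, h⟩⟩
    have e2 : Finset.univ.filter (fun i : Fin n => (i : ℕ) < m ∧ ¬ i ∈ hsupp E) = s := by
      rw [hs]
    rw [e1, e2, card_filter_lt hm] at h1
    have hdrm : d r ≤ m := hdm r
    rw [hwtE]
    omega
  have h𝒟rank' : ∀ r : Fin (K+1), finrank F (𝒟 (r.1+1)) = r.1 + 1 :=
    fun r => h𝒟rank (r.1+1) r.2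
  have hgw_eq : ∀ r : Fin (K+1), hgw 𝒞 (r.1+1) = d r := by
    intro r
    apply le_antisymm
    · exact Nat.sInf_le ⟨𝒟 (r.1+1), h𝒟le _, le_of_eq (h𝒟rank' r).symm, hwt𝒟 r⟩
    · refine le_csInf ⟨d r, 𝒟 (r.1+1), h𝒟le _, le_of_eq (h𝒟rank' r).symm, hwt𝒟 r⟩ ?_
      rintro w ⟨E, hE, hkE, rfl⟩
      exact hlow r E hE hkE
  have hgreedy : ∀ t, t < K+1 → IsGreedyH 𝒞 (t+1) (𝒟 (t+1)) := by
    intro t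
    induction t with
    | zero =>
      intro ht
      exact ⟨h𝒟le _, h𝒟rank 1 (by omega), by rw [hwt𝒟 ⟨0, ht⟩, hgw_eq ⟨0, ht⟩]⟩
    | succ t ih =>
      intro ht
      have ht' : t < K+1 := by omega
      refine ⟨h𝒟le _, h𝒟rank (t+2) (by omega),
        ⟨𝒟 (t+1), ih ht', le_of_lt (h𝒟lt (t+1) ht)⟩, ?_⟩
      intro ℰ hℰ hrℰ _
      have := hwt𝒟 ⟨t+1, ht⟩
      rw [this]
      exact hlow ⟨t+1, ht⟩ ℰ hℰ (le_of_eq hrℰ.symm)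
  have hgreedy_shape : ∀ t (𝒢 : Submodule F (Fin n → F)),
      IsGreedyH 𝒞 (t+1) 𝒢 → 𝒢 ≤ 𝒞 ∧ finrank F 𝒢 = t+1 := by
    intro t 𝒢 hg
    cases t with
    | zero => exact ⟨hg.1, hg.2.1⟩
    | succ t => exact ⟨hg.1, hg.2.1⟩
  have hgwt : ∀ r : Fin (K+1), hgreedyWt 𝒞 (r.1+1) = d r := by
    intro r
    apply le_antisymm
    · exact Nat.sInf_le ⟨𝒟 (r.1+1), hgreedy r.1 r.2, hwt𝒟 r⟩
    · refine le_csInf ⟨d r, 𝒟 (r.1+1), hgreedy r.1 r.2, hwt𝒟 r⟩ ?_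
      rintro w ⟨𝒢, hg, rfl⟩
      obtain ⟨h1, h2⟩ := hgreedy_shape r.1 𝒢 hg
      exact hlow r 𝒢 h1 (le_of_eq h2.symm)
  have hcc : ChainConditionH 𝒞 := by
    refine ⟨𝒟, h𝒟0, ?_, ?_, ?_⟩
    · rw [h𝒞rank]; exact h𝒟top
    · intro t ht; rw [h𝒞rank] at ht; exact h𝒟lt t ht
    · intro t h1 h2
      rw [h𝒞rank] at h2
      have hr : t - 1 < K + 1 := by omega
      have htt : t = (⟨t-1, hr⟩ : Fin (K+1)).1 + 1 := by simp; omega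
      rw [htt, hwt𝒟 ⟨t-1, hr⟩, hgw_eq ⟨t-1, hr⟩]
  exact ⟨𝒞, 𝒟, h𝒞rank, h𝒟0, h𝒟top, h𝒟lt, fun r => ⟨hgw_eq r, hwt𝒟 r⟩, hcc, hgwt⟩
end

section
/- Let 1 ≤ k ≤ n ≤ q with q a prime power, let 1 ≤ d_1 < d_2 < ... < d_k ≤ n be integers, let α_1, ..., α_n ∈ F_q be distinct elements, and for i ∈ [k] set f_i = (x − α_{d_i+1})(x − α_{d_i+2}) ⋯ (x − α_n) ∈ F_q[x]. Let 𝒞 ⊆ F_q^n be the code spanned by the rows of the k × n matrix G whose i-th row is (f_i(α_1), f_i(α_2), ..., f_i(α_n)). Then dim(𝒞) = k and d_r(𝒞) = d_r for all r ∈ [k]; moreover, for each r ∈ [k] the subspace spanned by the first r rows of G has support of cardinality exactly d_r, so 𝒞 satisfies the chain condition. -/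
open Module

variable {F : Type*} [Field F] [Fintype F]

/-!
Row `i` of `G` vanishes exactly at the positions `≥ d i`, so the rows are in echelon form: they
are linearly independent and rows `0, …, r` span a subcode supported on the first `d r`
positions. Conversely, a subcode of dimension `r + 1` meets the `(k - r)`-dimensional span of
the rows `i ≥ r` nontrivially. Those rows are evaluations of polynomials of degree `≤ n - d r`,
so a nonzero vector in their span has at most `n - d r` zeros, i.e. weight `≥ d r`.
-/

open Polynomial Finset Function

section LinearAlgebra

variable {K : Type*} [Field K]

theorem linearIndependent_of_pivots {ι κ : Type*} [Fintype ι] [LinearOrder ι] {v : ι → κ → K}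
    (p : ι → κ) (hpivot : ∀ i, v i (p i) ≠ 0) (hzero : ∀ ⦃i j⦄, i < j → v i (p j) = 0) :
    LinearIndependent K v := by
  classical
  let M : Matrix ι ι K := fun i j => v i (p j)
  have hdet : M.det ≠ 0 := by
    rw [Matrix.det_of_isLowerTriangular M fun i j hij => hzero hij]
    exact prod_ne_zero_iff.mpr fun i _ => hpivot i
  exact .of_comp (LinearMap.funLeft K K p) (Matrix.linearIndependent_rows_of_det_ne_zero hdet)

theorem finrank_span_image_finset {ι V : Type*} [AddCommGroup V] [Module K V] {v : ι → V}
    (hv : LinearIndependent K v) (s : Finset ι) :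
    finrank K (Submodule.span K (v '' s)) = #s := by
  rw [Set.image_eq_range]
  exact (finrank_span_eq_card (hv.comp _ Subtype.val_injective)).trans (by simp)

theorem exists_ne_zero_mem_inf_of_finrank_lt {V : Type*} [AddCommGroup V] [Module K V]
    [FiniteDimensional K V] {U W C : Submodule K V} (hU : U ≤ C) (hW : W ≤ C)
    (h : finrank K C < finrank K U + finrank K W) : ∃ x ∈ U, x ∈ W ∧ x ≠ 0 := by
  by_contra! hdisj
  have hinf : U ⊓ W = ⊥ := (Submodule.disjoint_def.mpr hdisj).eq_bot
  have hsum := Submodule.finrank_sup_add_finrank_inf_eq U W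
  have hsup := Submodule.finrank_mono (sup_le hU hW)
  rw [hinf, finrank_bot] at hsum
  omega

end LinearAlgebra

section EvalCode

variable {K : Type*} [Field K] {ι : Type*}

theorem eval_prod_X_sub_C_eq_zero_iff {α : ι → K} (hα : Injective α) (s : Finset ι) (l : ι) :
    (∏ i ∈ s, (X - C (α i))).eval (α l) = 0 ↔ l ∈ s := by
  simp [eval_prod, prod_eq_zero_iff, sub_eq_zero, hα.eq_iff]

noncomputable def evalCode (α : ι → K) (m : ℕ) : Submodule K (ι → K) :=
  (degreeLE K m).map (LinearMap.pi fun l => leval (α l))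

theorem mem_evalCode {α : ι → K} {m : ℕ} {x : ι → K} :
    x ∈ evalCode α m ↔ ∃ g : K[X], g.natDegree ≤ m ∧ (fun l => g.eval (α l)) = x := by
  simp [evalCode, mem_degreeLE, natDegree_le_iff_degree_le, funext_iff]

theorem evalCode_mono (α : ι → K) {m m' : ℕ} (h : m ≤ m') : evalCode α m ≤ evalCode α m' :=
  Submodule.map_mono (degreeLE_mono (by exact_mod_cast h))

theorem card_le_card_support_add_of_mem_evalCode [Fintype ι] [DecidableEq K] {α : ι → K}
    (hα : Injective α) {m : ℕ} {x : ι → K} (hx : x ∈ evalCode α m) (hx0 : x ≠ 0) :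
    Fintype.card ι ≤ #{l | x l ≠ 0} + m := by
  obtain ⟨g, hg, rfl⟩ := mem_evalCode.mp hx
  have hg0 : g ≠ 0 := by rintro rfl; exact hx0 (by ext; simp)
  have hroots : #{l | g.eval (α l) = 0} ≤ g.natDegree := by
    rw [← card_image_of_injective _ hα]
    refine card_le_degree_of_subset_roots fun a ha => ?_
    obtain ⟨l, hl, rfl⟩ := mem_image.mp ha
    exact (mem_roots hg0).mpr (mem_filter.mp hl).2
  have hsplit := card_filter_add_card_filter_not (s := univ) fun l => g.eval (α l) = 0
  rw [card_univ] at hsplit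
  simp only [ne_eq]
  omega

end EvalCode

section Weights

variable {K : Type*} [Field K] {n : ℕ}

theorem hsupp_span (s : Set (Fin n → K)) :
    hsupp (Submodule.span K s) = {i | ∃ x ∈ s, x i ≠ 0} := by
  ext i
  refine ⟨fun ⟨x, hx, hxi⟩ => ?_, fun ⟨x, hx, hxi⟩ => ⟨x, Submodule.subset_span hx, hxi⟩⟩
  by_contra! h
  simp only [Set.mem_ofPred_eq, not_exists, not_and, not_not] at h
  have hker : Submodule.span K s ≤ LinearMap.ker (LinearMap.proj i) :=
    Submodule.span_le.mpr h
  exact hxi (hker hx)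

theorem card_support_le_hwt [DecidableEq K] {𝒟 : Submodule K (Fin n → K)} {x : Fin n → K}
    (hx : x ∈ 𝒟) : #{i | x i ≠ 0} ≤ hwt 𝒟 := by
  rw [hwt, ← Set.ncard_coe_finset]
  exact Set.ncard_le_ncard fun i hi => ⟨x, hx, (mem_filter.mp hi).2⟩

theorem hgw_eq_of_forall_le {𝒞 𝒟₀ : Submodule K (Fin n → K)} {r w : ℕ} (h𝒟₀ : 𝒟₀ ≤ 𝒞)
    (hrank : r ≤ finrank K 𝒟₀) (hwt₀ : hwt 𝒟₀ = w)
    (hmin : ∀ 𝒟 ≤ 𝒞, r ≤ finrank K 𝒟 → w ≤ hwt 𝒟) : hgw 𝒞 r = w :=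
  le_antisymm (Nat.sInf_le ⟨𝒟₀, h𝒟₀, hrank, hwt₀⟩)
    (le_csInf ⟨w, 𝒟₀, h𝒟₀, hrank, hwt₀⟩ fun _ ⟨𝒟, h𝒟, hr, hw⟩ => hw ▸ hmin 𝒟 h𝒟 hr)

theorem chainConditionH_of_monotone {𝒞 : Submodule K (Fin n → K)}
    (D : ℕ → Submodule K (Fin n → K)) (hD : Monotone D)
    (hrank : ∀ r ≤ finrank K 𝒞, finrank K (D r) = r) (htop : D (finrank K 𝒞) = 𝒞)
    (hweight : ∀ r, 1 ≤ r → r ≤ finrank K 𝒞 → hwt (D r) = hgw 𝒞 r) : ChainConditionH 𝒞 := by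
  refine ⟨D, Submodule.finrank_eq_zero.mp (hrank 0 (Nat.zero_le _)), htop,
    fun r hr => (hD r.le_succ).lt_of_ne fun h => ?_, hweight⟩
  have := congrArg (fun E : Submodule K (Fin n → K) => finrank K E) h
  simp only [hrank r hr.le, hrank (r + 1) hr] at this
  omega

end Weights

theorem card_filter_le_val (n m : ℕ) : #{i : Fin n | m ≤ i.1} = n - m := by
  have hsplit := card_filter_add_card_filter_not (s := univ) fun i : Fin n => i.1 < m
  simp only [Fin.card_filter_val_lt, not_lt, card_univ, Fintype.card_fin] at hsplit
  omega

section StaircaseCode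

variable {K : Type*} [Field K] {n k : ℕ} {d : Fin k → ℕ} {G : Fin k → Fin n → K}

theorem finrank_span_image_setOf_val_lt (hli : LinearIndependent K G) {j : ℕ} (hj : j ≤ k) :
    finrank K (Submodule.span K (G '' {i | i.1 < j})) = j := by
  rw [show {i : Fin k | i.1 < j} = ↑(univ.filter fun i : Fin k => i.1 < j) by ext; simp,
    finrank_span_image_finset hli, Fin.card_filter_val_lt, min_eq_right hj]

theorem setOf_le_eq_setOf_val_lt (r : Fin k) : {i | i ≤ r} = {i : Fin k | i.1 < r.1 + 1} := by
  ext i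
  exact Fin.le_def.trans Nat.lt_add_one_iff.symm

theorem chainConditionH_span_range (hli : LinearIndependent K G)
    (hprefix : ∀ r : Fin k,
      hwt (Submodule.span K (G '' {i | i ≤ r})) = hgw (Submodule.span K (Set.range G)) (r.1 + 1)) :
    ChainConditionH (Submodule.span K (Set.range G)) := by
  have hrank : finrank K (Submodule.span K (Set.range G)) = k := by
    rw [finrank_span_eq_card hli, Fintype.card_fin]
  refine chainConditionH_of_monotone (fun j => Submodule.span K (G '' {i | i.1 < j}))
    (fun j j' h => Submodule.span_mono (Set.image_mono fun i hi => lt_of_lt_of_le hi h))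
    (fun j hj => finrank_span_image_setOf_val_lt hli (hrank ▸ hj)) ?_ fun j hj hjk => ?_
  · simp only [hrank, Fin.is_lt, Set.ofPred_true, Set.image_univ]
  · obtain ⟨r, rfl⟩ : ∃ r : Fin k, j = r.1 + 1 := ⟨⟨j - 1, by omega⟩, by simp only; omega⟩
    rw [← setOf_le_eq_setOf_val_lt, hprefix]

theorem linearIndependent_of_zero_pattern (hd : StrictMono d) (hpos : ∀ i, 1 ≤ d i)
    (hlast : ∀ i, d i ≤ n) (hG : ∀ i l, G i l = 0 ↔ d i ≤ l) : LinearIndependent K G :=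
  linearIndependent_of_pivots (fun j => ⟨d j - 1, by have := hpos j; have := hlast j; omega⟩)
    (fun j h => ((hG j _).mp h).not_gt (Nat.sub_one_lt (Nat.one_le_iff_ne_zero.mp (hpos j))))
    (fun i j hij => (hG i _).mpr (Nat.le_sub_one_of_lt (hd hij)))

theorem hsupp_span_image_setOf_le (hd : Monotone d) (hG : ∀ i l, G i l = 0 ↔ d i ≤ l)
    (r : Fin k) : hsupp (Submodule.span K (G '' {i | i ≤ r})) = {l | l.1 < d r} := by
  rw [hsupp_span]
  ext l
  constructor
  · rintro ⟨_, ⟨i, hi, rfl⟩, hil⟩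
    exact (not_le.mp (mt (hG i l).mpr hil)).trans_le (hd hi)
  · intro hl
    exact ⟨G r, ⟨r, le_refl r, rfl⟩, mt (hG r l).mp (not_le.mpr hl)⟩

theorem hwt_span_image_setOf_le (hd : Monotone d) (hlast : ∀ i, d i ≤ n)
    (hG : ∀ i l, G i l = 0 ↔ d i ≤ l) (r : Fin k) :
    hwt (Submodule.span K (G '' {i | i ≤ r})) = d r := by
  rw [hwt, hsupp_span_image_setOf_le hd hG r, Set.ncard_eq_toFinset_card', Set.toFinset_ofPred,
    Fin.card_filter_val_lt, min_eq_right (hlast r)]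

theorem le_hwt_of_le_span {α : Fin n → K} (hα : Injective α) (hd : Monotone d)
    (hlast : ∀ i, d i ≤ n) (hli : LinearIndependent K G)
    (heval : ∀ i, G i ∈ evalCode α (n - d i)) {𝒟 : Submodule K (Fin n → K)}
    (h𝒟 : 𝒟 ≤ Submodule.span K (Set.range G)) (r : Fin k) (hr : r.1 + 1 ≤ finrank K 𝒟) :
    d r ≤ hwt 𝒟 := by
  classical
  set W := Submodule.span K (G '' ↑(Ici r))
  have hWC : W ≤ Submodule.span K (Set.range G) :=
    Submodule.span_mono (Set.image_subset_range _ _)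
  have hWeval : W ≤ evalCode α (n - d r) := Submodule.span_le.mpr <| by
    rintro _ ⟨i, hi, rfl⟩
    exact evalCode_mono α (Nat.sub_le_sub_left (hd (mem_Ici.mp hi)) n) (heval i)
  have hrankW : finrank K W = k - r := by rw [finrank_span_image_finset hli, Fin.card_Ici]
  have hrankC : finrank K (Submodule.span K (Set.range G)) = k := by
    rw [finrank_span_eq_card hli, Fintype.card_fin]
  obtain ⟨x, hx𝒟, hxW, hx0⟩ := exists_ne_zero_mem_inf_of_finrank_lt h𝒟 hWC (by omega)
  have hdist := card_le_card_support_add_of_mem_evalCode hα (hWeval hxW) hx0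
  have hsupp_le := card_support_le_hwt hx𝒟
  rw [Fintype.card_fin] at hdist
  have := hlast r
  omega

end StaircaseCode

open Polynomial in
theorem reedSolomon_subcode_ghws_general {n k : ℕ}
    (d : Fin k → ℕ) (hmono : StrictMono d) (hpos : ∀ r, 1 ≤ d r) (hlast : ∀ r, d r ≤ n)
    (α : Fin n → F) (hα : Function.Injective α)
    (f : Fin k → Polynomial F)
    (hf : ∀ i : Fin k, f i = ∏ s ∈ Finset.univ.filter (fun s : Fin n => d i ≤ s.1),
      (X - Polynomial.C (α s)))
    (G : Fin k → (Fin n → F)) (hG : ∀ i l, G i l = (f i).eval (α l))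
    (𝒞 : Submodule F (Fin n → F)) (h𝒞 : 𝒞 = Submodule.span F (Set.range G)) :
    Module.finrank F 𝒞 = k ∧
    (∀ r : Fin k, hgw 𝒞 (r.1 + 1) = d r) ∧
    (∀ r : Fin k, hwt (Submodule.span F (G '' {i | i ≤ r})) = d r) ∧
    ChainConditionH 𝒞 := by
  subst h𝒞
  have hzero : ∀ i l, G i l = 0 ↔ d i ≤ l := fun i l => by
    rw [hG, hf, eval_prod_X_sub_C_eq_zero_iff hα, mem_filter]
    exact and_iff_right (mem_univ l)
  have heval : ∀ i, G i ∈ evalCode α (n - d i) := fun i => mem_evalCode.mpr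
    ⟨f i, by simp [hf, card_filter_le_val], funext fun l => (hG i l).symm⟩
  have hli := linearIndependent_of_zero_pattern hmono hpos hlast hzero
  have hprefix := hwt_span_image_setOf_le hmono.monotone hlast hzero
  have hgw_eq : ∀ r : Fin k, hgw (Submodule.span F (Set.range G)) (r.1 + 1) = d r := fun r =>
    hgw_eq_of_forall_le (Submodule.span_mono (Set.image_subset_range _ _))
      (by rw [setOf_le_eq_setOf_val_lt, finrank_span_image_setOf_val_lt hli r.2]) (hprefix r)
      fun _ h𝒟 hr => le_hwt_of_le_span hα hmono.monotone hlast hli heval h𝒟 r hr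
  exact ⟨by rw [finrank_span_eq_card hli, Fintype.card_fin], hgw_eq, hprefix,
    chainConditionH_span_range hli fun r => (hprefix r).trans (hgw_eq r).symm⟩

open Polynomial in
/-- Explicit construction: for `1 ≤ k ≤ n ≤ q`, `1 ≤ d_1 < ⋯ < d_k ≤ n`, distinct
`α_1, …, α_n ∈ F_q` and `f_i = (x - α_{d_i+1}) ⋯ (x - α_n)`, the code `𝒞` spanned by the rows
`(f_i(α_1), …, f_i(α_n))`, `i ∈ [k]`, has `dim 𝒞 = k` and `d_r(𝒞) = d_r` for all `r ∈ [k]`;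
moreover the span of the first `r` rows has support of cardinality `d_r`, so `𝒞` satisfies
the chain condition. -/
theorem reedSolomon_subcode_ghws {n k : ℕ} (hk : 1 ≤ k) (hkn : k ≤ n)
    (hq : n ≤ Fintype.card F)
    (d : Fin k → ℕ) (hmono : StrictMono d) (hpos : ∀ r, 1 ≤ d r) (hlast : ∀ r, d r ≤ n)
    (α : Fin n → F) (hα : Function.Injective α)
    (f : Fin k → Polynomial F)
    (hf : ∀ i : Fin k, f i = ∏ s ∈ Finset.univ.filter (fun s : Fin n => d i ≤ s.1),
      (X - Polynomial.C (α s)))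
    (G : Fin k → (Fin n → F)) (hG : ∀ i l, G i l = (f i).eval (α l))
    (𝒞 : Submodule F (Fin n → F)) (h𝒞 : 𝒞 = Submodule.span F (Set.range G)) :
    Module.finrank F 𝒞 = k ∧
    (∀ r : Fin k, hgw 𝒞 (r.1 + 1) = d r) ∧
    (∀ r : Fin k, hwt (Submodule.span F (G '' {i | i ≤ r})) = d r) ∧
    ChainConditionH 𝒞 :=
  reedSolomon_subcode_ghws_general d hmono hpos hlast α hα f hf G hG 𝒞 h𝒞
end

section
/- Let 0 ≤ k_2 < k_1 ≤ n be integers, let 1 ≤ d_1 < d_2 < ... < d_{k_1−k_2} ≤ n − k_2 be integers, and let q be a prime power with q ≥ n − k_2. Then there exist linear block codes 𝒞_2 ⊊ 𝒞_1 ⊆ F_q^n with dim(𝒞_1) = k_1, dim(𝒞_2) = k_2, and d_i(𝒞_1, 𝒞_2) = d_i for all i ∈ [k_1 − k_2]. -/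
open Module
open Polynomial

variable {F : Type*} [Field F] [Fintype F]

/-- The `r`-th relative generalized Hamming weight of a pair of nested codes
`𝒞₂ ⊊ 𝒞₁ ⊆ F^n`. -/
noncomputable def rgw {n : ℕ} (𝒞₁ 𝒞₂ : Submodule F (Fin n → F)) (r : ℕ) : ℕ :=
  sInf {w | ∃ 𝒟 : Submodule F (Fin n → F),
    𝒟 ≤ 𝒞₁ ∧ 𝒟 ⊓ 𝒞₂ = ⊥ ∧ r ≤ Module.finrank F 𝒟 ∧ hwt 𝒟 = w}


/-- counting: number of `t : Fin N` with `t.1 < k` is `k` (for `k ≤ N`). -/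
lemma aux_card_filter_lt' (N k : ℕ) (h : k ≤ N) :
    (Finset.univ.filter (fun t : Fin N => t.1 < k)).card = k := by
  have : Finset.univ.filter (fun t : Fin N => t.1 < k)
      = Finset.map (Fin.castLEEmb h) Finset.univ := by
    ext t
    simp only [Finset.mem_filter, Finset.mem_univ, true_and, Finset.mem_map,
      Fin.castLEEmb, Function.Embedding.coeFn_mk]
    constructor
    · intro ht; exact ⟨⟨t.1, ht⟩, by ext; simp⟩
    · rintro ⟨s, rfl⟩; exact s.2
  rw [this, Finset.card_map, Finset.card_univ, Fintype.card_fin]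

/-- If all nonzero elements of a finite-dimensional space of polynomials have
`natDegree` in a finite set `S`, the dimension is at most `S.card`. -/
lemma aux_finrank_le_card' {F : Type*} [Field F] :
    ∀ (S : Finset ℕ) (D : Submodule F (Polynomial F)), FiniteDimensional F D →
      (∀ p ∈ D, p ≠ 0 → p.natDegree ∈ S) → Module.finrank F D ≤ S.card := by
  intro S
  induction S using Finset.strongInduction with
  | _ S ih =>
    intro D hfd h
    rcases S.eq_empty_or_nonempty with rfl | hS
    · have hbot : D = ⊥ := by
        rw [eq_bot_iff]
        intro p hp
        by_contra hne
        have : p ≠ 0 := by simpa [Submodule.mem_bot] using hne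
        exact absurd (h p hp this) (Finset.notMem_empty _)
      rw [hbot]; simp [finrank_bot]
    · obtain ⟨s, hsmem⟩ := hS
      set f : D →ₗ[F] F := (Polynomial.lcoeff F s).comp D.subtype with hf
      set D' : Submodule F (Polynomial F) := (LinearMap.ker f).map D.subtype with hD'
      have hker : ∀ p ∈ D', p ≠ 0 → p.natDegree ∈ S.erase s := by
        intro p hp hne
        obtain ⟨y, hy, rfl⟩ := Submodule.mem_map.mp hp
        have hpD : D.subtype y ∈ D := y.2
        have hmem := h _ hpD hne
        refine Finset.mem_erase.mpr ⟨?_, hmem⟩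
        intro heq
        have hco : (D.subtype y : Polynomial F).coeff s = 0 := by
          have := (LinearMap.mem_ker).mp hy
          simpa [hf, Polynomial.lcoeff] using this
        rw [← heq] at hco
        rw [Polynomial.coeff_natDegree] at hco
        exact hne (Polynomial.leadingCoeff_eq_zero.mp hco)
      have hfd' : FiniteDimensional F D' := Module.Finite.map _ _
      have h1 := ih (S.erase s) (Finset.erase_ssubset hsmem) D' hfd' hker
      have h2 : Module.finrank F D' = Module.finrank F (LinearMap.ker f) :=
        Submodule.finrank_map_subtype_eq D _
      have h3 := LinearMap.finrank_range_add_finrank_ker f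
      have h4 : Module.finrank F (LinearMap.range f) ≤ 1 := by
        have := Submodule.finrank_le (LinearMap.range f)
        simpa [Module.finrank_self] using this
      have h5 : (S.erase s).card + 1 = S.card := by
        rw [Finset.card_erase_of_mem hsmem]
        have : 1 ≤ S.card := Finset.card_pos.mpr ⟨s, hsmem⟩
        omega
      omega

set_option synthInstance.maxHeartbeats 1000000 in
set_option maxHeartbeats 2000000 in
/-- Any increasing sequence `1 ≤ d_1 < ⋯ < d_{k₁-k₂} ≤ n - k₂` is the sequence of relative
generalized Hamming weights of a pair of nested codes `𝒞₂ ⊊ 𝒞₁ ⊆ F_q^n` of dimensions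
`k₁` and `k₂`, provided `q ≥ n - k₂`. -/
theorem exists_pair_with_rghws {n k₁ k₂ : ℕ} (hk : k₂ < k₁) (hk₁ : k₁ ≤ n)
    (hq : n - k₂ ≤ Fintype.card F)
    (d : Fin (k₁ - k₂) → ℕ) (hmono : StrictMono d) (hpos : ∀ r, 1 ≤ d r)
    (hlast : ∀ r, d r ≤ n - k₂) :
    ∃ 𝒞₁ 𝒞₂ : Submodule F (Fin n → F), 𝒞₂ < 𝒞₁ ∧
      Module.finrank F 𝒞₁ = k₁ ∧ Module.finrank F 𝒞₂ = k₂ ∧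
      ∀ r : Fin (k₁ - k₂), rgw 𝒞₁ 𝒞₂ (r.1 + 1) = d r := by
  classical
  have hNn : (n - k₂) ≤ n := by omega
  have hk₂n : k₂ ≤ n := by omega
  have hdN : ∀ l, d l ≤ (n - k₂) := hlast
  -- the evaluation points
  obtain ⟨e⟩ : Nonempty (Fin (n - k₂) ↪ F) := Function.Embedding.nonempty_of_card_le (by simpa using hq)
  set α : Fin (n - k₂) → F := ⇑e with hαdef
  have hα : Function.Injective α := e.injective
  -- the polynomials
  set q : Fin (k₁ - k₂) → F[X] :=
    fun l => ∏ t ∈ Finset.univ.filter (fun t : Fin (n - k₂) => d l ≤ t.1), (X - C (α t)) with hqdef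
  have hqmonic : ∀ l, (q l).Monic :=
    fun l => monic_prod_of_monic _ _ (fun i _ => monic_X_sub_C _)
  have hcardle : ∀ l, (Finset.univ.filter (fun t : Fin (n - k₂) => d l ≤ t.1)).card = (n - k₂) - d l := by
    intro l
    have h1 := Finset.card_filter_add_card_filter_not (s := (Finset.univ : Finset (Fin (n - k₂))))
      (fun t : Fin (n - k₂) => t.1 < d l)
    have h2 := aux_card_filter_lt' (n - k₂) (d l) (hdN l)
    have h3 : (Finset.univ.filter (fun t : Fin (n - k₂) => ¬ t.1 < d l))
        = (Finset.univ.filter (fun t : Fin (n - k₂) => d l ≤ t.1)) := by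
      apply Finset.filter_congr; intro t _; simp [not_lt]
    rw [h3] at h1
    simp only [Finset.card_univ, Fintype.card_fin] at h1
    omega
  have hqdeg : ∀ l, (q l).natDegree = (n - k₂) - d l := by
    intro l
    rw [hqdef, Polynomial.natDegree_prod _ _ (fun i _ => X_sub_C_ne_zero _)]
    simp [Polynomial.natDegree_X_sub_C, hcardle l]
  have hqeval0 : ∀ l (i : Fin (n - k₂)), d l ≤ i.1 → (q l).eval (α i) = 0 := by
    intro l i hi
    rw [hqdef]
    rw [Polynomial.eval_prod]
    refine Finset.prod_eq_zero (Finset.mem_filter.mpr ⟨Finset.mem_univ _, hi⟩) ?_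
    simp
  have hqevaln : ∀ l (i : Fin (n - k₂)), i.1 < d l → (q l).eval (α i) ≠ 0 := by
    intro l i hi
    rw [hqdef, Polynomial.eval_prod]
    rw [Finset.prod_ne_zero_iff]
    intro t ht
    have hti : t ≠ i := by
      intro h; rw [h] at ht
      exact absurd (Finset.mem_filter.mp ht).2 (by omega)
    intro hz
    rw [Polynomial.eval_sub, Polynomial.eval_X, Polynomial.eval_C, sub_eq_zero] at hz
    exact hti (hα hz).symm
  -- key: leading coefficient of a combination
  have hkey : ∀ (c : Fin (k₁ - k₂) → F) (l₀ : Fin (k₁ - k₂)), c l₀ ≠ 0 → (∀ l, l < l₀ → c l = 0) →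
      (∑ l, c l • q l).coeff ((n - k₂) - d l₀) = c l₀ ∧ (∑ l, c l • q l).natDegree ≤ (n - k₂) - d l₀ := by
    intro c l₀ hc0 hcless
    constructor
    · rw [Polynomial.finset_sum_coeff]
      rw [Finset.sum_eq_single l₀]
      · rw [Polynomial.coeff_smul, smul_eq_mul]
        have hco : (q l₀).coeff ((n - k₂) - d l₀) = 1 := by
          have h := (hqmonic l₀).coeff_natDegree
          rwa [hqdeg l₀] at h
        rw [hco, mul_one]
      · intro l _ hne
        rw [Polynomial.coeff_smul, smul_eq_mul]
        rcases lt_or_gt_of_ne hne with hlt | hgt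
        · rw [hcless l hlt, zero_mul]
        · have hlt2 : (q l).natDegree < (n - k₂) - d l₀ := by
            rw [hqdeg l]
            have h1 : d l₀ < d l := hmono hgt
            have h2 := hdN l
            omega
          rw [Polynomial.coeff_eq_zero_of_natDegree_lt hlt2, mul_zero]
      · intro h; exact absurd (Finset.mem_univ l₀) h
    · apply Polynomial.natDegree_sum_le_of_forall_le
      intro l _
      rcases lt_or_ge l l₀ with hlt | hge
      · rw [hcless l hlt, zero_smul]; simp
      · refine le_trans (Polynomial.natDegree_smul_le _ _) ?_
        rw [hqdeg l]
        have h1 := hmono.monotone hge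
        omega
  have hcomb : ∀ (c : Fin (k₁ - k₂) → F), c ≠ 0 →
      ∃ l₀ : Fin (k₁ - k₂), (∑ l, c l • q l) ≠ 0 ∧ (∑ l, c l • q l).natDegree = (n - k₂) - d l₀ := by
    intro c hc
    have hne : (Finset.univ.filter (fun l => c l ≠ 0)).Nonempty := by
      by_contra h
      rw [Finset.not_nonempty_iff_eq_empty, Finset.filter_eq_empty_iff] at h
      exact hc (funext fun l => by simpa using h (Finset.mem_univ l))
    set l₀ := (Finset.univ.filter (fun l => c l ≠ 0)).min' hne with hl₀
    have hc0 : c l₀ ≠ 0 := (Finset.mem_filter.mp ((Finset.univ.filter _).min'_mem hne)).2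
    have hcless : ∀ l, l < l₀ → c l = 0 := by
      intro l hl
      by_contra h
      have hle : l₀ ≤ l := Finset.min'_le _ l (Finset.mem_filter.mpr ⟨Finset.mem_univ l, h⟩)
      exact absurd hl (not_lt.mpr hle)
    obtain ⟨h1, h2⟩ := hkey c l₀ hc0 hcless
    refine ⟨l₀, ?_, ?_⟩
    · intro h; rw [h] at h1; exact hc0 (by simpa using h1.symm)
    · exact le_antisymm h2 (Polynomial.le_natDegree_of_ne_zero (by rw [h1]; exact hc0))
  -- the span of all the polynomials
  set W : Submodule F F[X] := Submodule.span F (Set.range q) with hWdef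
  have hWdeg : ∀ p ∈ W, p.degree < ((n - k₂) : WithBot ℕ) := by
    intro p hp
    have hle : W ≤ Polynomial.degreeLT F (n - k₂) := by
      rw [hWdef, Submodule.span_le]
      rintro _ ⟨l, rfl⟩
      rw [SetLike.mem_coe, Polynomial.mem_degreeLT]
      rw [Polynomial.degree_eq_natDegree (hqmonic l).ne_zero, hqdeg l]
      exact_mod_cast (by have := hpos l; have := hdN l; omega : (n - k₂) - d l < (n - k₂))
    exact Polynomial.mem_degreeLT.mp (hle hp)
  -- embedding into F^n
  set L : F[X] →ₗ[F] (Fin n → F) :=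
    { toFun := fun p i => if h : (i : ℕ) < (n - k₂) then p.eval (α ⟨i, h⟩) else 0
      map_add' := by intro p1 p2; funext i; by_cases h : (i:ℕ) < (n - k₂) <;> simp [h]
      map_smul' := by intro a p; funext i; by_cases h : (i:ℕ) < (n - k₂) <;> simp [h] } with hLdef
  have hLapp : ∀ p (i : Fin n) (h : (i : ℕ) < (n - k₂)), L p i = p.eval (α ⟨i, h⟩) := by
    intro p i h; simp [hLdef, h]
  have hLapp' : ∀ p (i : Fin n), ¬ ((i : ℕ) < (n - k₂)) → L p i = 0 := by
    intro p i h; simp [hLdef, h]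
  have hLne : ∀ p, p.degree < ((n - k₂) : WithBot ℕ) → p ≠ 0 → L p ≠ 0 := by
    intro p hdeg hp0 hL0
    have hnd : p.natDegree < n - k₂ := (Polynomial.natDegree_lt_iff_degree_lt hp0).mpr hdeg
    apply hp0
    apply Polynomial.eq_zero_of_natDegree_lt_card_of_eval_eq_zero' p (Finset.univ.image α)
    · intro y hy
      obtain ⟨t, _, rfl⟩ := Finset.mem_image.mp hy
      have h1 : ((Fin.castLE hNn t : Fin n) : ℕ) < n - k₂ := t.2
      have hz := congrFun hL0 (Fin.castLE hNn t)
      rw [hLapp p _ h1] at hz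
      have h2 : (⟨((Fin.castLE hNn t : Fin n) : ℕ), h1⟩ : Fin (n - k₂)) = t := by ext; rfl
      rw [h2] at hz
      simpa using hz
    · rwa [Finset.card_image_of_injective _ hα, Finset.card_univ, Fintype.card_fin]
  -- the codes
  set πh : (Fin n → F) →ₗ[F] (Fin (n - k₂) → F) := LinearMap.funLeft F F (Fin.castLE hNn) with hπdef
  set C₂ : Submodule F (Fin n → F) := LinearMap.ker πh with hC2def
  set U : Submodule F (Fin n → F) := Submodule.map L W with hUdef
  set C₁ : Submodule F (Fin n → F) := C₂ ⊔ U with hC1def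
  have hC2mem : ∀ x, x ∈ C₂ ↔ ∀ i : Fin n, (i : ℕ) < (n - k₂) → x i = 0 := by
    intro x
    rw [hC2def, LinearMap.mem_ker]
    constructor
    · intro h i hi
      have hcast : Fin.castLE hNn ⟨(i : ℕ), hi⟩ = i := by ext; rfl
      have := congrFun h ⟨(i : ℕ), hi⟩
      rw [hπdef] at this
      simpa [LinearMap.funLeft_apply, hcast] using this
    · intro h
      funext j
      rw [hπdef]
      simp only [LinearMap.funLeft_apply, Pi.zero_apply]
      exact h _ (by simpa using j.2)
  have hUC2 : C₂ ⊓ U = ⊥ := by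
    rw [eq_bot_iff]
    intro x hx
    obtain ⟨hx2, hxU⟩ := Submodule.mem_inf.mp hx
    obtain ⟨p, hpW, rfl⟩ := Submodule.mem_map.mp hxU
    rw [Submodule.mem_bot]
    funext i
    rw [Pi.zero_apply]
    by_cases h : (i : ℕ) < n - k₂
    · exact (hC2mem _).mp hx2 i h
    · exact hLapp' p i h
  have hLI : LinearIndependent F (fun l => L (q l)) := by
    rw [Fintype.linearIndependent_iff]
    intro c hc
    by_contra h
    push_neg at h
    obtain ⟨l, hl⟩ := h
    have hcne : c ≠ 0 := fun h0 => hl (by rw [h0]; rfl)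
    obtain ⟨l₀, hne, hdeg⟩ := hcomb c hcne
    have hpW : (∑ l, c l • q l) ∈ W := by
      rw [hWdef]
      exact Submodule.sum_mem _ (fun l _ => Submodule.smul_mem _ _ (Submodule.subset_span ⟨l, rfl⟩))
    have hLp : L (∑ l, c l • q l) = 0 := by
      rw [map_sum]
      simp_rw [map_smul]
      exact hc
    exact hLne _ (hWdeg _ hpW) hne hLp
  have hfinC2 : Module.finrank F C₂ = k₂ := by
    have hsurj : Function.Surjective πh := by
      rw [hπdef]
      exact LinearMap.funLeft_surjective_of_injective F F _ (Fin.castLE_injective hNn)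
    have h3 := LinearMap.finrank_range_add_finrank_ker πh
    rw [LinearMap.range_eq_top.mpr hsurj, finrank_top, Module.finrank_pi, Module.finrank_pi] at h3
    rw [hC2def]
    simp only [Fintype.card_fin] at h3
    omega
  have hfinU : Module.finrank F U = (k₁ - k₂) := by
    have hUspan : U = Submodule.span F (Set.range (fun l => L (q l))) := by
      rw [hUdef, hWdef, Submodule.map_span, ← Set.range_comp]
      rfl
    rw [hUspan, finrank_span_eq_card hLI, Fintype.card_fin]
  have hfinC1 : Module.finrank F C₁ = k₁ := by
    have h := Submodule.finrank_sup_add_finrank_inf_eq C₂ U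
    rw [hUC2, hfinC2, hfinU, finrank_bot] at h
    rw [hC1def]
    omega
  have hlt : C₂ < C₁ := by
    refine lt_of_le_of_ne (hC1def ▸ le_sup_left) ?_
    intro h
    rw [h, hfinC1] at hfinC2
    omega
  -- interpolation
  set Ψ : (Fin n → F) →ₗ[F] F[X] :=
    (Lagrange.interpolate Finset.univ α).comp πh with hΨdef
  have hΨL : ∀ p, p.degree < ((n - k₂) : WithBot ℕ) → Ψ (L p) = p := by
    intro p hdeg
    have h1 : πh (L p) = fun i : Fin (n - k₂) => p.eval (α i) := by
      funext i
      rw [hπdef]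
      rw [LinearMap.funLeft_apply]
      have hi : ((Fin.castLE hNn i : Fin n) : ℕ) < n - k₂ := i.2
      rw [hLapp p _ hi]
      congr 1
    rw [hΨdef, LinearMap.comp_apply, h1]
    exact (Lagrange.eq_interpolate (Set.injOn_of_injective hα) (by
      simpa [Finset.card_univ] using hdeg)).symm
  have hΨC2 : ∀ x ∈ C₂, Ψ x = 0 := by
    intro x hx
    rw [hC2def] at hx
    rw [hΨdef, LinearMap.comp_apply, LinearMap.mem_ker.mp hx, map_zero]
  refine ⟨C₁, C₂, hlt, hfinC1, hfinC2, ?_⟩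
  intro r
  have hdrN : d r ≤ (n - k₂) := hdN r
  -- upper bound witness
  have hmem : d r ∈ {w | ∃ 𝒟 : Submodule F (Fin n → F),
      𝒟 ≤ C₁ ∧ 𝒟 ⊓ C₂ = ⊥ ∧ r.1 + 1 ≤ Module.finrank F 𝒟 ∧ hwt 𝒟 = w} := by
    have hr1 : r.1 + 1 ≤ k₁ - k₂ := r.2
    set qs : Fin (r.1 + 1) → F[X] := fun l => q (Fin.castLE hr1 l) with hqs
    set Dr : Submodule F (Fin n → F) := Submodule.span F (Set.range (fun l => L (qs l))) with hDrdef
    have hDrU : Dr ≤ U := by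
      rw [hDrdef, Submodule.span_le]
      rintro _ ⟨l, rfl⟩
      rw [SetLike.mem_coe, hUdef]
      exact Submodule.mem_map.mpr ⟨qs l, by
        rw [hWdef]; exact Submodule.subset_span ⟨Fin.castLE hr1 l, rfl⟩, rfl⟩
    have hind : LinearIndependent F (fun l => L (qs l)) :=
      hLI.comp (Fin.castLE hr1) (Fin.castLE_injective hr1)
    refine ⟨Dr, le_trans hDrU (hC1def ▸ le_sup_right), ?_, ?_, ?_⟩
    · rw [eq_bot_iff, ← hUC2]
      intro x hx
      obtain ⟨h1, h2⟩ := Submodule.mem_inf.mp hx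
      exact Submodule.mem_inf.mpr ⟨h2, hDrU h1⟩
    · have heq : Module.finrank F Dr = r.1 + 1 := by
        rw [hDrdef, finrank_span_eq_card hind, Fintype.card_fin]
      exact heq.ge
    · have hsupp_eq : hsupp Dr = {i : Fin n | (i : ℕ) < d r} := by
        ext i
        constructor
        · rintro ⟨x, hxD, hxi⟩
          rw [hDrdef] at hxD
          obtain ⟨c, hc⟩ := (Submodule.mem_span_range_iff_exists_fun F).mp hxD
          by_contra hge
          rw [Set.mem_setOf_eq, not_lt] at hge
          apply hxi
          rw [← hc, Finset.sum_apply]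
          apply Finset.sum_eq_zero
          intro l _
          rw [Pi.smul_apply]
          by_cases h : (i : ℕ) < n - k₂
          · rw [hLapp _ _ h]
            have hle : d (Fin.castLE hr1 l) ≤ (i : ℕ) := by
              refine le_trans (le_trans (hmono.monotone ?_) le_rfl) hge
              rw [Fin.le_def]
              exact Nat.lt_succ_iff.mp l.2
            rw [hqs]
            rw [hqeval0 _ _ hle]
            simp
          · rw [hLapp' _ _ h]; simp
        · intro hi
          rw [Set.mem_setOf_eq] at hi
          have hiN : (i : ℕ) < n - k₂ := lt_of_lt_of_le hi hdrN
          refine ⟨L (qs ⟨r.1, Nat.lt_succ_self _⟩), ?_, ?_⟩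
          · rw [hDrdef]
            exact Submodule.subset_span ⟨⟨r.1, Nat.lt_succ_self _⟩, rfl⟩
          · rw [hLapp _ _ hiN]
            have hcast : Fin.castLE hr1 ⟨r.1, Nat.lt_succ_self _⟩ = r := by ext; rfl
            show Polynomial.eval _ (q (Fin.castLE hr1 ⟨r.1, Nat.lt_succ_self _⟩)) ≠ 0
            rw [hcast]
            exact hqevaln r _ hi
      show hwt Dr = d r
      unfold hwt
      rw [hsupp_eq]
      have hset : {i : Fin n | (i : ℕ) < d r}
          = ↑(Finset.univ.filter (fun i : Fin n => (i : ℕ) < d r)) := by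
        ext i; simp
      rw [hset, Set.ncard_coe_finset, aux_card_filter_lt' n (d r) (le_trans hdrN hNn)]
  -- lower bound
  have hlb : ∀ w ∈ {w | ∃ 𝒟 : Submodule F (Fin n → F),
      𝒟 ≤ C₁ ∧ 𝒟 ⊓ C₂ = ⊥ ∧ r.1 + 1 ≤ Module.finrank F 𝒟 ∧ hwt 𝒟 = w}, d r ≤ w := by
    rintro w ⟨D, hD1, hD2, hDr, rfl⟩
    set Dp : Submodule F F[X] := Submodule.map Ψ D with hDpdef
    have hdecomp : ∀ x ∈ D, Ψ x ∈ W ∧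
        (∀ (i : Fin n) (h : (i : ℕ) < n - k₂), x i = (Ψ x).eval (α ⟨(i : ℕ), h⟩)) := by
      intro x hx
      obtain ⟨cc, hcc, u, huU, hsum⟩ := Submodule.mem_sup.mp (hD1 hx)
      rw [hUdef] at huU
      obtain ⟨p, hpW, rfl⟩ := Submodule.mem_map.mp huU
      have hΨx : Ψ x = p := by
        rw [← hsum, map_add, hΨC2 cc hcc, zero_add, hΨL p (hWdeg p hpW)]
      refine ⟨hΨx ▸ hpW, ?_⟩
      intro i h
      rw [hΨx, ← hsum, Pi.add_apply, (hC2mem cc).mp hcc i h, zero_add, hLapp p i h]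
    have hDpW : Dp ≤ W := by
      rw [hDpdef]
      rintro _ ⟨x, hx, rfl⟩
      exact (hdecomp x hx).1
    have hinj : ∀ x ∈ D, Ψ x = 0 → x = 0 := by
      intro x hx h0
      have hxz : x ∈ C₂ := by
        rw [hC2mem]
        intro i hi
        rw [(hdecomp x hx).2 i hi, h0]
        simp
      have hxb : x ∈ D ⊓ C₂ := Submodule.mem_inf.mpr ⟨hx, hxz⟩
      rw [hD2] at hxb
      simpa using hxb
    have hrank : Module.finrank F Dp = Module.finrank F D := by
      set f : D →ₗ[F] F[X] := Ψ.comp D.subtype with hfdef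
      have hfinj : Function.Injective f := by
        rw [← LinearMap.ker_eq_bot, eq_bot_iff]
        intro y hy
        have hy0 := hinj y y.2 (LinearMap.mem_ker.mp hy)
        simpa [Submodule.mem_bot] using Subtype.ext hy0
      have h1 := LinearMap.finrank_range_of_inj hfinj
      have h2 : LinearMap.range f = Dp := by
        rw [hfdef, LinearMap.range_comp, Submodule.range_subtype, hDpdef]
      rw [← h2, h1]
    have hlow : ∃ p ∈ Dp, p ≠ 0 ∧ p.natDegree ≤ (n - k₂) - d r := by
      by_contra hcon
      push_neg at hcon
      set S : Finset ℕ := (Finset.univ.filter (fun l : Fin (k₁ - k₂) => l < r)).image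
        (fun l => (n - k₂) - d l) with hSdef
      have hmemS : ∀ p ∈ Dp, p ≠ 0 → p.natDegree ∈ S := by
        intro p hp hne
        obtain ⟨c, hc⟩ := (Submodule.mem_span_range_iff_exists_fun F).mp (hDpW hp)
        have hcne : c ≠ 0 := by
          rintro rfl
          apply hne
          rw [← hc]
          simp
        obtain ⟨l₀, hne2, hdeg⟩ := hcomb c hcne
        rw [hc] at hdeg
        have hgt := hcon p hp hne
        have hdl : d l₀ < d r := by
          have h1 := hdN l₀
          omega
        refine Finset.mem_image.mpr ⟨l₀, ?_, hdeg.symm⟩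
        simp only [Finset.mem_filter, Finset.mem_univ, true_and]
        exact hmono.lt_iff_lt.mp hdl
      have hcard : S.card ≤ r.1 := by
        refine le_trans Finset.card_image_le ?_
        have hfeq : (Finset.univ.filter (fun l : Fin (k₁ - k₂) => l < r))
            = (Finset.univ.filter (fun l : Fin (k₁ - k₂) => l.1 < r.1)) := by
          apply Finset.filter_congr
          intro l _
          exact Fin.lt_def
        rw [hfeq, aux_card_filter_lt' _ _ (le_of_lt r.2)]
      have hfin : FiniteDimensional F Dp := by
        rw [hDpdef]
        exact Module.Finite.map D Ψ
      have hle := aux_finrank_le_card' S Dp hfin hmemS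
      omega
    obtain ⟨p, hpDp, hpne, hpdeg⟩ := hlow
    rw [hDpdef] at hpDp
    obtain ⟨x, hxD, hΨx⟩ := Submodule.mem_map.mp hpDp
    set NZ : Finset (Fin (n - k₂)) := Finset.univ.filter (fun t => p.eval (α t) ≠ 0) with hNZdef
    have hZcard : (Finset.univ.filter (fun t : Fin (n - k₂) => p.eval (α t) = 0)).card
        ≤ p.natDegree := by
      set Z := Finset.univ.filter (fun t : Fin (n - k₂) => p.eval (α t) = 0) with hZdef
      have h1 : (Z.image α).card = Z.card := Finset.card_image_of_injective _ hα
      have h2 : Z.image α ⊆ p.roots.toFinset := by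
        intro y hy
        obtain ⟨t, ht, rfl⟩ := Finset.mem_image.mp hy
        rw [Multiset.mem_toFinset, Polynomial.mem_roots hpne]
        exact (Finset.mem_filter.mp ht).2
      calc Z.card = (Z.image α).card := h1.symm
        _ ≤ p.roots.toFinset.card := Finset.card_le_card h2
        _ ≤ _ := le_trans (Multiset.toFinset_card_le _) (Polynomial.card_roots' p)
    have hNZcard : d r ≤ NZ.card := by
      have hsplit := Finset.card_filter_add_card_filter_not
        (s := (Finset.univ : Finset (Fin (n - k₂)))) (fun t => p.eval (α t) = 0)
      have hQ : (Finset.univ.filter (fun t : Fin (n - k₂) => ¬ p.eval (α t) = 0)) = NZ := rfl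
      rw [hQ] at hsplit
      simp only [Finset.card_univ, Fintype.card_fin] at hsplit
      omega
    have hsub : (fun t : Fin (n - k₂) => (Fin.castLE hNn t : Fin n)) '' ↑NZ ⊆ hsupp D := by
      rintro _ ⟨t, ht, rfl⟩
      refine ⟨x, hxD, ?_⟩
      have hiN : ((Fin.castLE hNn t : Fin n) : ℕ) < n - k₂ := t.2
      rw [(hdecomp x hxD).2 _ hiN, hΨx]
      have hcast : (⟨((Fin.castLE hNn t : Fin n) : ℕ), hiN⟩ : Fin (n - k₂)) = t := by ext; rfl
      rw [hcast]
      exact (Finset.mem_filter.mp ht).2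
    show d r ≤ hwt D
    unfold hwt
    calc d r ≤ NZ.card := hNZcard
      _ = ((fun t : Fin (n - k₂) => (Fin.castLE hNn t : Fin n)) '' ↑NZ).ncard := by
          rw [Set.ncard_image_of_injective _ (Fin.castLE_injective hNn), Set.ncard_coe_finset]
      _ ≤ (hsupp D).ncard := Set.ncard_le_ncard hsub (Set.toFinite _)
  exact le_antisymm (Nat.sInf_le hmem) (le_csInf ⟨d r, hmem⟩ hlb)
end
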